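/- arXiv:2104.10055 — 8 statements merged into one kernel-verified Lean document; each statement's English description precedes it below -/
import Mathlib

section
/- Let ℓ be a prime and k₁, k₂ ≥ 2 integers. Then |𝒜_ℓ| = (1/λ₁)·(ℓ−1)³·(ℓ²+ℓ)², i.e. λ₁·|𝒜_ℓ| = (ℓ−1)³(ℓ²+ℓ)². -/
set_option maxRecDepth 16000

open Subgroup

private lemma aux_card_pow_eq_one {G : Type*} [CommGroup G] [Fintype G] [IsCyclic G] (d : ℕ) :
    Nat.card {v : G // v ^ d = 1} = Nat.gcd d (Nat.card G) := by
  classical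
  have hn : (0:ℕ) < Nat.card G := Nat.card_pos
  obtain ⟨g, hg⟩ := IsCyclic.exists_generator (α := G)
  have hog : orderOf g = Nat.card G := orderOf_eq_card_of_forall_mem_zpowers hg
  set f : G →* G := powMonoidHom d with hf
  have hsub : Nat.card {v : G // v ^ d = 1} = Nat.card f.ker :=
    Nat.card_congr (Equiv.subtypeEquivRight fun v => by
      simp [hf, MonoidHom.mem_ker, powMonoidHom_apply])
  have hrange : f.range = Subgroup.zpowers (g ^ d) := by
    ext x
    simp only [MonoidHom.mem_range, Subgroup.mem_zpowers_iff]
    constructor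
    · rintro ⟨y, rfl⟩
      obtain ⟨k, rfl⟩ := Subgroup.mem_zpowers_iff.mp (hg y)
      exact ⟨k, by simp only [hf, powMonoidHom_apply]; group⟩
    · rintro ⟨k, rfl⟩
      exact ⟨g ^ k, by simp only [hf, powMonoidHom_apply]; group⟩
  have hcard_range : Nat.card f.range = Nat.card G / Nat.gcd (Nat.card G) d := by
    rw [hrange, Nat.card_zpowers, orderOf_pow, hog]
  have h1 : Nat.card G = Nat.card f.range * Nat.card f.ker := by
    rw [Subgroup.card_eq_card_quotient_mul_card_subgroup f.ker,
      Nat.card_congr (QuotientGroup.quotientKerEquivRange f).toEquiv]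
  set m := Nat.gcd (Nat.card G) d with hm
  have hmdvd : m ∣ Nat.card G := Nat.gcd_dvd_left _ _
  have hmpos : 0 < m := Nat.gcd_pos_of_pos_left _ hn
  have hqpos : 0 < Nat.card G / m := Nat.div_pos (Nat.le_of_dvd hn hmdvd) hmpos
  have h2 : Nat.card G / m * Nat.card f.ker = Nat.card G / m * m := by
    rw [Nat.div_mul_cancel hmdvd, ← hcard_range]
    exact h1.symm
  have : Nat.card f.ker = m := Nat.eq_of_mul_eq_mul_left hqpos h2
  rw [hsub, this, hm, Nat.gcd_comm]

/-- For a prime ℓ and integers k₁, k₂ ≥ 2,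
λ₁ · |𝒜_ℓ| = (ℓ−1)³(ℓ²+ℓ)², where λ₁ = gcd(ℓ − 1, k₁ − 1, k₂ − 1) and
𝒜_ℓ = {(A,B) ∈ GL₂(ℤ/ℓℤ)² : det A = v^(k₁−1), det B = v^(k₂−1) for some unit v}. -/
theorem stmt_3 (ℓ : ℕ) (hℓ : ℓ.Prime) (k₁ k₂ : ℕ) (hk₁ : 2 ≤ k₁) (hk₂ : 2 ≤ k₂) :
    Nat.gcd (ℓ - 1) (Nat.gcd (k₁ - 1) (k₂ - 1)) *
      Nat.card {p : Matrix.GeneralLinearGroup (Fin 2) (ZMod ℓ) ×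
          Matrix.GeneralLinearGroup (Fin 2) (ZMod ℓ) //
        ∃ v : (ZMod ℓ)ˣ,
          (p.1 : Matrix (Fin 2) (Fin 2) (ZMod ℓ)).det = (v : ZMod ℓ) ^ (k₁ - 1) ∧
          (p.2 : Matrix (Fin 2) (Fin 2) (ZMod ℓ)).det = (v : ZMod ℓ) ^ (k₂ - 1)} =
      (ℓ - 1) ^ 3 * (ℓ ^ 2 + ℓ) ^ 2 := by
  classical
  haveI := Fact.mk hℓ
  set a := k₁ - 1 with ha
  set b := k₂ - 1 with hb
  set G := (ZMod ℓ)ˣ with hG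
  set GL2 := Matrix.GeneralLinearGroup (Fin 2) (ZMod ℓ) with hGL2
  set φ : G →* G × G := (powMonoidHom a).prod (powMonoidHom b) with hφ
  set D : GL2 × GL2 →* G × G :=
    (Matrix.GeneralLinearGroup.det).prodMap (Matrix.GeneralLinearGroup.det) with hD
  set T := φ.range with hT
  set lam := Nat.gcd (ℓ - 1) (Nat.gcd a b) with hlam
  -- determinant is surjective
  have hdet : Function.Surjective (Matrix.GeneralLinearGroup.det : GL2 →* G) := by
    intro u
    have hmul : ∀ (x : (ZMod ℓ)ˣ) (y : (ZMod ℓ)ˣ), (x:ZMod ℓ) * (y:ZMod ℓ) = 1 →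
        Matrix.diagonal ![(x : ZMod ℓ), 1] * Matrix.diagonal ![(y : ZMod ℓ), 1] = 1 := by
      intro x y hxy
      rw [Matrix.diagonal_mul_diagonal]
      have h1 : (fun i => ![(x : ZMod ℓ), 1] i * ![(y : ZMod ℓ), 1] i) = fun _ => (1 : ZMod ℓ) := by
        funext i; fin_cases i <;> simp [hxy]
      rw [h1]
      exact Matrix.diagonal_one
    refine ⟨⟨Matrix.diagonal ![(u : ZMod ℓ), 1], Matrix.diagonal ![((u⁻¹ : (ZMod ℓ)ˣ) : ZMod ℓ), 1],
      hmul u u⁻¹ (by rw [← Units.val_mul, mul_inv_cancel, Units.val_one]), hmul u⁻¹ u (by rw [← Units.val_mul, inv_mul_cancel, Units.val_one])⟩, ?_⟩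
    apply Units.ext
    rw [Matrix.GeneralLinearGroup.val_det_apply]
    show (Matrix.diagonal ![(u : ZMod ℓ), 1]).det = (u : ZMod ℓ)
    rw [Matrix.det_diagonal, Fin.prod_univ_two]
    simp
  have hDsurj : Function.Surjective D := by
    rw [hD, MonoidHom.coe_prodMap]
    exact hdet.prodMap hdet
  -- identify the subtype with the comap subgroup
  have hcardA : Nat.card {p : GL2 × GL2 //
        ∃ v : (ZMod ℓ)ˣ,
          (p.1 : Matrix (Fin 2) (Fin 2) (ZMod ℓ)).det = (v : ZMod ℓ) ^ a ∧
          (p.2 : Matrix (Fin 2) (Fin 2) (ZMod ℓ)).det = (v : ZMod ℓ) ^ b} =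
      Nat.card (Subgroup.comap D T) := by
    refine Nat.card_congr (Equiv.subtypeEquivRight fun p => ?_)
    rw [Subgroup.mem_comap, hT]
    constructor
    · rintro ⟨v, h1, h2⟩
      refine ⟨v, ?_⟩
      have e1 : Matrix.GeneralLinearGroup.det p.1 = v ^ a := by
        apply Units.ext
        rw [Units.val_pow_eq_pow_val, Matrix.GeneralLinearGroup.val_det_apply]
        exact h1
      have e2 : Matrix.GeneralLinearGroup.det p.2 = v ^ b := by
        apply Units.ext
        rw [Units.val_pow_eq_pow_val, Matrix.GeneralLinearGroup.val_det_apply]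
        exact h2
      show (v ^ a, v ^ b) = (Matrix.GeneralLinearGroup.det p.1, Matrix.GeneralLinearGroup.det p.2)
      rw [e1, e2]
    · rintro ⟨v, hv⟩
      rw [Prod.ext_iff] at hv
      obtain ⟨h1, h2⟩ := hv
      have h1' : v ^ a = Matrix.GeneralLinearGroup.det p.1 := h1
      have h2' : v ^ b = Matrix.GeneralLinearGroup.det p.2 := h2
      have c1 := congrArg Units.val h1'
      have c2 := congrArg Units.val h2'
      rw [Units.val_pow_eq_pow_val, Matrix.GeneralLinearGroup.val_det_apply] at c1 c2
      exact ⟨v, c1.symm, c2.symm⟩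
  -- cardinal of the unit group
  have hGcard : Nat.card G = ℓ - 1 := by
    rw [hG, Nat.card_eq_fintype_card, ZMod.card_units_eq_totient, Nat.totient_prime hℓ]
  -- cardinal of the kernel of φ
  have hkerφ : Nat.card φ.ker = lam := by
    have e1 : Nat.card φ.ker = Nat.card {v : G // v ^ Nat.gcd a b = 1} := by
      refine Nat.card_congr (Equiv.subtypeEquivRight fun v => ?_)
      simp only [hφ, MonoidHom.mem_ker, MonoidHom.prod_apply, powMonoidHom_apply,
        Prod.ext_iff, Prod.fst_one, Prod.snd_one]
      rw [← orderOf_dvd_iff_pow_eq_one, ← orderOf_dvd_iff_pow_eq_one,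
        ← orderOf_dvd_iff_pow_eq_one, Nat.dvd_gcd_iff]
    rw [e1, aux_card_pow_eq_one, hGcard, hlam, Nat.gcd_comm]
  -- cardinal of GL₂
  have hL : Nat.card GL2 = (ℓ - 1) ^ 2 * (ℓ ^ 2 + ℓ) := by
    have := Matrix.card_GL_field (𝔽 := ZMod ℓ) (n := 2)
    rw [hGL2]
    rw [this, Fin.prod_univ_two, ZMod.card]
    obtain ⟨m, rfl⟩ : ∃ m, ℓ = m + 1 := ⟨ℓ - 1, (Nat.succ_pred_eq_of_pos hℓ.pos).symm⟩
    simp only [Fin.val_zero, Fin.val_one, pow_zero, pow_one, Nat.add_sub_cancel]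
    have hsq : (m + 1) ^ 2 = m ^ 2 + 2 * m + 1 := by ring
    have e1 : (m + 1) ^ 2 - 1 = m ^ 2 + 2 * m := by omega
    have e2 : (m + 1) ^ 2 - (m + 1) = m ^ 2 + m := by omega
    rw [e1, e2]
    ring
  -- group-theoretic counting
  have h1 : Nat.card (Subgroup.comap D T) * T.index = Nat.card (GL2 × GL2) := by
    rw [← Subgroup.index_comap_of_surjective T hDsurj]
    exact Subgroup.card_mul_index _
  have h2 : Nat.card T * T.index = Nat.card (G × G) := Subgroup.card_mul_index T
  have h3 : Nat.card T * lam = Nat.card G := by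
    rw [← hkerφ, hT]
    rw [Subgroup.card_eq_card_quotient_mul_card_subgroup φ.ker,
      Nat.card_congr (QuotientGroup.quotientKerEquivRange φ).toEquiv]
  -- arithmetic
  set t := Nat.card T with ht
  set I := T.index with hI
  set A := Nat.card (Subgroup.comap D T) with hA
  have htpos : 0 < t := Nat.card_pos
  have hlampos : 0 < lam := by
    have := Nat.card_pos (α := φ.ker); omega
  rw [hcardA]
  rw [Nat.card_prod, hGcard] at h2
  rw [hGcard] at h3
  rw [Nat.card_prod, hL] at h1
  -- from h3 : t * lam = ℓ - 1
  have hIeq : I = t * lam ^ 2 := by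
    apply Nat.eq_of_mul_eq_mul_left htpos
    rw [h2, ← h3]; ring
  have hAeq : A = t ^ 3 * lam ^ 2 * (ℓ ^ 2 + ℓ) ^ 2 := by
    have hpos : 0 < t * lam ^ 2 := by positivity
    apply Nat.eq_of_mul_eq_mul_left hpos
    calc t * lam ^ 2 * A = A * I := by rw [hIeq]; ring
    _ = ((ℓ - 1) ^ 2 * (ℓ ^ 2 + ℓ)) * ((ℓ - 1) ^ 2 * (ℓ ^ 2 + ℓ)) := h1
    _ = (t * lam) ^ 4 * (ℓ ^ 2 + ℓ) ^ 2 := by rw [h3]; ring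
    _ = t * lam ^ 2 * (t ^ 3 * lam ^ 2 * (ℓ ^ 2 + ℓ) ^ 2) := by ring
  rw [hAeq, ← h3]; ring
end

section
/- Let ℓ be an odd prime, d a unit of ℤ/ℓℤ, and t ∈ ℤ/ℓℤ. Then the number of matrices γ ∈ GL₂(ℤ/ℓℤ) with det(γ) = d and tr(γ) = t equals: ℓ² + ℓ if t² − 4d is a quadratic residue; ℓ² if t² − 4d = 0; and ℓ² − ℓ if t² − 4d is a quadratic non-residue. -/
/-!
A matrix with trace `t` and determinant `d` is `!![a, b; c, t - a]` with `b * c = a * (t - a) - d`.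
Over a field with `q` elements, `b * c = m` has `q - 1` solutions, plus `q` more when `m = 0`, that
is, when `a` is a root of `X² - tX + d`; that polynomial has `1 + χ(t² - 4d)` roots, `χ` the
quadratic character. So there are `q² + χ(t² - 4d) q` such matrices, all invertible when `d ≠ 0`.
-/

open Finset

section CommRing
variable {R : Type*} [CommRing R]

def finTwoDetTraceEquiv (d t : R) :
    {M : Matrix (Fin 2) (Fin 2) R // M.det = d ∧ M.trace = t} ≃
      Σ a : R, {p : R × R // p.1 * p.2 = a * (t - a) - d} where
  toFun M := ⟨M.1 0 0, (M.1 0 1, M.1 1 0), by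
    obtain ⟨M, hdet, htr⟩ := M
    rw [Matrix.det_fin_two] at hdet
    rw [Matrix.trace_fin_two] at htr
    linear_combination M 0 0 * htr - hdet⟩
  invFun p := ⟨!![p.1, p.2.1.1; p.2.1.2, t - p.1], by
    rw [Matrix.det_fin_two_of, Matrix.trace_fin_two_of]
    exact ⟨by linear_combination -p.2.2, by ring⟩⟩
  left_inv M := by
    obtain ⟨M, -, htr⟩ := M
    rw [Matrix.trace_fin_two] at htr
    ext i j
    fin_cases i <;> fin_cases j <;> simp [← htr]
  right_inv _ := rfl

theorem Units.natCard_subtype_val {M : Type*} [Monoid M] (P : M → Prop)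
    (hP : ∀ x, P x → IsUnit x) : Nat.card {u : Mˣ // P u} = Nat.card {x // P x} :=
  Nat.card_congr
    { toFun u := ⟨u.1, u.2⟩
      invFun x := ⟨(hP x x.2).unit, x.2⟩
      left_inv _ := Subtype.ext (Units.ext rfl)
      right_inv _ := rfl }

end CommRing

section FiniteField
variable {F : Type*} [Field F] [Fintype F] [DecidableEq F]

theorem card_subtype_mul_left_eq (a m : F) :
    Fintype.card {b : F // a * b = m} =
      if a = 0 then (if m = 0 then Fintype.card F else 0) else 1 := by
  split_ifs with ha hm
  · simp [ha, hm]
  · simp [ha, Ne.symm hm]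
  · rw [Fintype.card_congr (Equiv.subtypeEquivRight fun b => (eq_inv_mul_iff_mul_eq₀ ha).symm)]
    exact Fintype.card_subtype_eq _

theorem card_subtype_mul_eq (m : F) :
    (Fintype.card {p : F × F // p.1 * p.2 = m} : ℤ) =
      Fintype.card F - 1 + if m = 0 then (Fintype.card F : ℤ) else 0 := by
  rw [Fintype.card_congr (Equiv.subtypeProdEquivSigmaSubtype fun a b => a * b = m),
    Fintype.card_sigma, Fintype.sum_eq_add_sum_compl 0]
  simp only [card_subtype_mul_left_eq]
  rw [sum_ite_of_false fun x hx => by simpa using hx, sum_const, card_compl, card_singleton,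
    smul_eq_mul, mul_one, Nat.cast_add, Nat.cast_sub Fintype.card_pos]
  push_cast
  ring

theorem card_roots_quadratic (hF : ringChar F ≠ 2) (t d : F) :
    (#{a : F | a * (t - a) = d} : ℤ) = quadraticChar F (t ^ 2 - 4 * d) + 1 := by
  have h2 : (2 : F) ≠ 0 := Ring.two_ne_zero hF
  rw [← quadraticChar_card_sqrts hF, Set.toFinset_ofPred]
  congr 1
  apply card_bij' (fun a _ => 2 * a - t) (fun s _ => (s + t) / 2)
  · intro a ha
    simp only [mem_filter, mem_univ, true_and] at ha ⊢
    linear_combination -4 * ha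
  · intro s hs
    simp only [mem_filter, mem_univ, true_and] at hs ⊢
    field_simp
    linear_combination -hs
  · intro a _
    field_simp
    ring
  · intro s _
    field_simp
    ring

theorem natCard_det_trace_eq (hF : ringChar F ≠ 2) (d t : F) :
    (Nat.card {M : Matrix (Fin 2) (Fin 2) F // M.det = d ∧ M.trace = t} : ℤ) =
      Fintype.card F ^ 2 + quadraticChar F (t ^ 2 - 4 * d) * Fintype.card F := by
  rw [Nat.card_congr (finTwoDetTraceEquiv d t), Nat.card_eq_fintype_card, Fintype.card_sigma,
    Nat.cast_sum]
  simp only [card_subtype_mul_eq, sub_eq_zero]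
  rw [sum_add_distrib, sum_ite, sum_const_zero, sum_const, sum_const, card_univ,
    nsmul_eq_mul, nsmul_eq_mul]
  linear_combination (Fintype.card F : ℤ) * card_roots_quadratic hF t d

theorem natCard_GL_det_trace_eq (hF : ringChar F ≠ 2) (d : Fˣ) (t : F) :
    (Nat.card {γ : Matrix.GeneralLinearGroup (Fin 2) F //
        (γ : Matrix (Fin 2) (Fin 2) F).det = (d : F) ∧
        Matrix.trace (γ : Matrix (Fin 2) (Fin 2) F) = t} : ℤ) =
      Fintype.card F ^ 2 + quadraticChar F (t ^ 2 - 4 * d) * Fintype.card F := by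
  rw [Units.natCard_subtype_val (fun M : Matrix (Fin 2) (Fin 2) F => M.det = d ∧ M.trace = t)
      fun M hM => (M.isUnit_iff_isUnit_det).mpr (hM.1 ▸ d.isUnit),
    natCard_det_trace_eq hF]

end FiniteField

/-- For an odd prime ℓ, a unit d of ℤ/ℓℤ and t ∈ ℤ/ℓℤ, the number of matrices
γ ∈ GL₂(ℤ/ℓℤ) with det γ = d and tr γ = t is: ℓ² + ℓ if t² − 4d is a quadratic
residue; ℓ² if t² − 4d = 0; ℓ² − ℓ if t² − 4d is a quadratic non-residue. -/
theorem stmt_5 (ℓ : ℕ) (hℓ : ℓ.Prime) (hℓodd : ℓ ≠ 2) (d : (ZMod ℓ)ˣ) (t : ZMod ℓ) :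
    ((∃ u : (ZMod ℓ)ˣ, t ^ 2 - 4 * (d : ZMod ℓ) = (u : ZMod ℓ) ^ 2) →
      Nat.card {γ : Matrix.GeneralLinearGroup (Fin 2) (ZMod ℓ) //
          (γ : Matrix (Fin 2) (Fin 2) (ZMod ℓ)).det = (d : ZMod ℓ) ∧
          Matrix.trace (γ : Matrix (Fin 2) (Fin 2) (ZMod ℓ)) = t} = ℓ ^ 2 + ℓ) ∧
    (t ^ 2 - 4 * (d : ZMod ℓ) = 0 →
      Nat.card {γ : Matrix.GeneralLinearGroup (Fin 2) (ZMod ℓ) //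
          (γ : Matrix (Fin 2) (Fin 2) (ZMod ℓ)).det = (d : ZMod ℓ) ∧
          Matrix.trace (γ : Matrix (Fin 2) (Fin 2) (ZMod ℓ)) = t} = ℓ ^ 2) ∧
    ((IsUnit (t ^ 2 - 4 * (d : ZMod ℓ)) ∧
        ¬∃ u : (ZMod ℓ)ˣ, t ^ 2 - 4 * (d : ZMod ℓ) = (u : ZMod ℓ) ^ 2) →
      Nat.card {γ : Matrix.GeneralLinearGroup (Fin 2) (ZMod ℓ) //
          (γ : Matrix (Fin 2) (Fin 2) (ZMod ℓ)).det = (d : ZMod ℓ) ∧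
          Matrix.trace (γ : Matrix (Fin 2) (Fin 2) (ZMod ℓ)) = t} = ℓ ^ 2 - ℓ) := by
  have : Fact ℓ.Prime := ⟨hℓ⟩
  have hcount := natCard_GL_det_trace_eq (by rwa [ZMod.ringChar_zmod_n]) d t
  rw [ZMod.card] at hcount
  refine ⟨fun ⟨u, hu⟩ => ?_, fun h0 => ?_, fun ⟨hunit, hnonsq⟩ => ?_⟩
  · rw [hu, quadraticChar_sq_one' u.ne_zero] at hcount
    zify
    linear_combination hcount
  · rw [h0, quadraticChar_zero] at hcount
    zify
    linear_combination hcount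
  · have hnonsq' : ¬IsSquare (t ^ 2 - 4 * (d : ZMod ℓ)) := by
      rintro ⟨r, hr⟩
      have hr0 : r ≠ 0 := by rintro rfl; exact hunit.ne_zero (by simpa using hr)
      exact hnonsq ⟨Units.mk0 r hr0, by rw [hr, Units.val_mk0, sq]⟩
    rw [quadraticChar_neg_one_iff_not_isSquare.mpr hnonsq'] at hcount
    zify [Nat.le_self_pow two_ne_zero ℓ]
    linear_combination hcount
end

section
/- Fix integers k₁, k₂ ≥ 2. There exists a constant C > 0 (depending only on k₁ and k₂) such that for every odd prime ℓ, | |𝒞_ℓ| − ℓ⁶/λ₁ | ≤ C·ℓ⁵. -/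
/-!
A matrix in `M₂(K)` with trace `t` and determinant `d` is `!![a, b; c, t - a]` with
`b * c = a * (t - a) - d`. Counting the pairs `(b, c)` gives `q * (q - 1) + q * r` such matrices,
where `r ≤ 2` is the number of roots of `a * (t - a) = d`; so each count lies between `q(q - 1)`
and `q(q + 1)`. The admissible determinant pairs `(v ^ a, v ^ b)` form the image of an endomorphism
of the cyclic group `Kˣ` whose kernel is the `gcd(a, b)`-torsion, so there are
`(q - 1) / gcd(q - 1, a, b)` of them. Summing over these pairs and over the common trace puts
`|𝒞| * λ` between `q³(q - 1)³` and `q³(q - 1)(q + 1)²`, both within `3q⁵` of `q⁶`.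
-/

open Finset Matrix

theorem IsCyclic.card_range_powMonoidHom_prod_mul_gcd {G : Type*} [CommGroup G] [IsCyclic G]
    [Finite G] (a b : ℕ) :
    Nat.card ((powMonoidHom a).prod (powMonoidHom b) : G →* G × G).range *
      (Nat.card G).gcd (a.gcd b) = Nat.card G := by
  have hker : ((powMonoidHom a).prod (powMonoidHom b) : G →* G × G).ker =
      (powMonoidHom (a.gcd b)).ker := by
    ext g
    simp [pow_gcd_eq_one, Prod.ext_iff]
  rw [← Subgroup.index_ker, hker, ← IsCyclic.card_powMonoidHom_ker, mul_comm,
    Subgroup.card_mul_index]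

def Matrix.traceDetEquiv {R : Type*} [CommRing R] (t d : R) :
    {M : Matrix (Fin 2) (Fin 2) R // M.trace = t ∧ M.det = d} ≃
      Σ a : R, {x : R × R // x.1 * x.2 = a * (t - a) - d} where
  toFun M := ⟨M.1 0 0, (M.1 0 1, M.1 1 0), by
    obtain ⟨M, hMt, hMd⟩ := M
    rw [trace_fin_two] at hMt
    rw [det_fin_two] at hMd
    linear_combination M 0 0 * hMt - hMd⟩
  invFun x := ⟨!![x.1, x.2.1.1; x.2.1.2, t - x.1], by
    refine ⟨by simp [trace_fin_two], ?_⟩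
    simp [det_fin_two]
    linear_combination -x.2.2⟩
  left_inv M := by
    obtain ⟨M, hMt, -⟩ := M
    rw [trace_fin_two] at hMt
    ext i j
    fin_cases i <;> fin_cases j <;> simp
    linear_combination -hMt
  right_inv x := rfl

theorem Matrix.GeneralLinearGroup.card_filter_det_mem_trace_eq {n R : Type*} [Fintype n]
    [DecidableEq n] [CommRing R] [Fintype R] [DecidableEq R] (H : Finset (Rˣ × Rˣ)) :
    #{p : GL n R × GL n R | (det p.1, det p.2) ∈ H ∧
        (p.1 : Matrix n n R).trace = (p.2 : Matrix n n R).trace} =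
      ∑ u ∈ H, ∑ t : R, #{g : GL n R | (g : Matrix n n R).trace = t ∧ det g = u.1} *
        #{g : GL n R | (g : Matrix n n R).trace = t ∧ det g = u.2} := by
  rw [card_eq_sum_card_fiberwise (f := fun p => ((det p.1, det p.2), (p.1 : Matrix n n R).trace))
    (t := H ×ˢ univ) (fun p hp => by simp_all), sum_product]
  refine sum_congr rfl fun u hu => sum_congr rfl fun t _ => ?_
  rw [← card_product]
  congr 1
  ext ⟨A, B⟩
  simp only [mem_filter, mem_univ, true_and, mem_product, Prod.ext_iff]
  constructor
  · rintro ⟨⟨-, htr⟩, ⟨hA, hB⟩, hAt⟩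
    exact ⟨⟨hAt, hA⟩, htr ▸ hAt, hB⟩
  · rintro ⟨⟨hAt, hA⟩, hBt, hB⟩
    exact ⟨⟨by rwa [hA, hB], hAt.trans hBt.symm⟩, ⟨hA, hB⟩, hAt⟩

section FiniteField

variable {K : Type*} [Field K] [Fintype K] [DecidableEq K]

theorem card_filter_mul_eq (m : K) :
    #{x : K × K | x.1 * x.2 = m} = (Fintype.card K - 1) + if m = 0 then Fintype.card K else 0 := by
  rw [card_filter, Fintype.sum_prod_type]
  simp only [← card_filter]
  rw [Fintype.sum_eq_add_sum_compl (0 : K), add_comm]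
  have h_unit : ∀ b ∈ ({0}ᶜ : Finset K), #{c : K | b * c = m} = 1 := fun b hb => by
    have hb : b ≠ 0 := by simpa using hb
    simp [← eq_inv_mul_iff_mul_eq₀ hb, filter_eq']
  rw [sum_congr rfl h_unit, sum_const, card_compl, card_singleton, smul_eq_mul, mul_one]
  congr 1
  by_cases hm : m = 0 <;> simp [hm, eq_comm]

theorem card_filter_mul_sub_eq_le_two (t d : K) : #{a : K | a * (t - a) = d} ≤ 2 := by
  rcases (univ.filter fun a : K => a * (t - a) = d).eq_empty_or_nonempty with h | ⟨a₀, ha₀⟩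
  · simp [h]
  refine le_trans (card_le_card fun a ha => ?_) (card_le_two (a := a₀) (b := t - a₀))
  simp only [mem_filter, mem_univ, true_and] at ha ha₀
  have : (a - a₀) * (t - a - a₀) = 0 := by linear_combination ha - ha₀
  rcases mul_eq_zero.mp this with h | h
  · simp [sub_eq_zero.mp h]
  · simp [show a = t - a₀ by linear_combination -h]

theorem Matrix.card_trace_det_eq (t d : K) :
    Fintype.card {M : Matrix (Fin 2) (Fin 2) K // M.trace = t ∧ M.det = d} =
      Fintype.card K * (Fintype.card K - 1) + Fintype.card K * #{a : K | a * (t - a) = d} := by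
  rw [Fintype.card_congr (traceDetEquiv t d), Fintype.card_sigma]
  simp only [Fintype.card_subtype, card_filter_mul_eq, sub_eq_zero, sum_add_distrib, sum_const,
    card_univ, smul_eq_mul, sum_ite]
  ring

theorem Matrix.GeneralLinearGroup.card_trace_det_eq (t : K) (u : Kˣ) :
    #{g : GL (Fin 2) K | (g : Matrix (Fin 2) (Fin 2) K).trace = t ∧ det g = u} =
      Fintype.card {M : Matrix (Fin 2) (Fin 2) K // M.trace = t ∧ M.det = u} := by
  rw [← Fintype.card_subtype]
  refine Fintype.card_of_bijective
    (f := fun g => ⟨g.1, g.2.1, by rw [← val_det_apply, g.2.2]⟩) ⟨?_, ?_⟩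
  · intro g h hgh
    exact Subtype.ext (Units.ext (congrArg Subtype.val hgh))
  · rintro ⟨M, hMt, hMd⟩
    exact ⟨⟨mkOfDetNeZero M (by simp [hMd]), hMt, Units.ext hMd⟩, rfl⟩

theorem Matrix.GeneralLinearGroup.card_trace_det_bounds (t : K) (u : Kˣ) :
    Fintype.card K * (Fintype.card K - 1) ≤
        #{g : GL (Fin 2) K | (g : Matrix (Fin 2) (Fin 2) K).trace = t ∧ det g = u} ∧
      #{g : GL (Fin 2) K | (g : Matrix (Fin 2) (Fin 2) K).trace = t ∧ det g = u} ≤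
        Fintype.card K * (Fintype.card K + 1) := by
  rw [card_trace_det_eq, Matrix.card_trace_det_eq]
  have hq : 1 ≤ Fintype.card K := Fintype.card_pos
  have hroots := card_filter_mul_sub_eq_le_two t (u : K)
  constructor
  · exact Nat.le_add_right _ _
  · calc _ ≤ Fintype.card K * (Fintype.card K - 1) + Fintype.card K * 2 := by gcongr
      _ = Fintype.card K * (Fintype.card K + 1) := by
        rw [← mul_add]; congr 1; omega

theorem Matrix.GeneralLinearGroup.card_filter_det_mem_trace_eq_bounds (H : Finset (Kˣ × Kˣ)) :
    #H * Fintype.card K * (Fintype.card K * (Fintype.card K - 1)) ^ 2 ≤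
        #{p : GL (Fin 2) K × GL (Fin 2) K | (det p.1, det p.2) ∈ H ∧
          (p.1 : Matrix (Fin 2) (Fin 2) K).trace = (p.2 : Matrix (Fin 2) (Fin 2) K).trace} ∧
      #{p : GL (Fin 2) K × GL (Fin 2) K | (det p.1, det p.2) ∈ H ∧
          (p.1 : Matrix (Fin 2) (Fin 2) K).trace = (p.2 : Matrix (Fin 2) (Fin 2) K).trace} ≤
        #H * Fintype.card K * (Fintype.card K * (Fintype.card K + 1)) ^ 2 := by
  rw [card_filter_det_mem_trace_eq]
  constructor
  · calc _ = ∑ _u ∈ H, ∑ _t : K, (Fintype.card K * (Fintype.card K - 1)) ^ 2 := by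
          simp [mul_assoc]
      _ ≤ _ := sum_le_sum fun u _ => sum_le_sum fun t _ => by
          rw [sq]
          exact Nat.mul_le_mul (card_trace_det_bounds t u.1).1 (card_trace_det_bounds t u.2).1
  · calc _ ≤ ∑ _u ∈ H, ∑ _t : K, (Fintype.card K * (Fintype.card K + 1)) ^ 2 :=
          sum_le_sum fun u _ => sum_le_sum fun t _ => by
            rw [sq]
            exact Nat.mul_le_mul (card_trace_det_bounds t u.1).2 (card_trace_det_bounds t u.2).2
      _ = _ := by simp [mul_assoc]

variable (K) in
/-- `𝒞_q` with the exponents `a = k₁ - 1` and `b = k₂ - 1`. -/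
def Matrix.GeneralLinearGroup.detPowTraceEqPairs (a b : ℕ) : Set (GL (Fin 2) K × GL (Fin 2) K) :=
  {p | (∃ v : Kˣ, (p.1 : Matrix (Fin 2) (Fin 2) K).det = (v : K) ^ a ∧
      (p.2 : Matrix (Fin 2) (Fin 2) K).det = (v : K) ^ b) ∧
    (p.1 : Matrix (Fin 2) (Fin 2) K).trace = (p.2 : Matrix (Fin 2) (Fin 2) K).trace}

theorem Matrix.GeneralLinearGroup.card_detPowTraceEqPairs_mul_gcd_bounds (a b : ℕ) :
    Fintype.card K ^ 3 * (Fintype.card K - 1) ^ 3 ≤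
        Nat.card (detPowTraceEqPairs K a b) * (Fintype.card K - 1).gcd (a.gcd b) ∧
      Nat.card (detPowTraceEqPairs K a b) * (Fintype.card K - 1).gcd (a.gcd b) ≤
        Fintype.card K ^ 3 * (Fintype.card K - 1) * (Fintype.card K + 1) ^ 2 := by
  set q := Fintype.card K
  set g := (q - 1).gcd (a.gcd b)
  set ψ : Kˣ →* Kˣ × Kˣ := (powMonoidHom a).prod (powMonoidHom b)
  set H := univ.image ψ
  have hH : #H * g = q - 1 := by
    have hunits : Nat.card Kˣ = q - 1 := by rw [Nat.card_eq_fintype_card, Fintype.card_units]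
    have hrange : Nat.card ψ.range = #H := by
      rw [← SetLike.coe_sort_coe, MonoidHom.coe_range, Nat.card_eq_card_toFinset,
        Set.toFinset_range]
    have := IsCyclic.card_range_powMonoidHom_prod_mul_gcd (G := Kˣ) a b
    rw [hunits, hrange] at this
    exact this
  have hpairs : detPowTraceEqPairs K a b = {p | (det p.1, det p.2) ∈ H ∧
      (p.1 : Matrix (Fin 2) (Fin 2) K).trace = (p.2 : Matrix (Fin 2) (Fin 2) K).trace} := by
    ext p
    simp [detPowTraceEqPairs, H, ψ, Prod.ext_iff, Units.ext_iff, eq_comm]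
  obtain ⟨hlow, hhigh⟩ := card_filter_det_mem_trace_eq_bounds H
  rw [hpairs, Nat.card_eq_card_toFinset, Set.toFinset_ofPred]
  constructor
  · calc q ^ 3 * (q - 1) ^ 3 = #H * q * (q * (q - 1)) ^ 2 * g := by rw [← hH]; ring
      _ ≤ _ := Nat.mul_le_mul_right _ hlow
  · calc _ ≤ #H * q * (q * (q + 1)) ^ 2 * g := Nat.mul_le_mul_right _ hhigh
      _ = q ^ 3 * (q - 1) * (q + 1) ^ 2 := by rw [← hH]; ring

end FiniteField

theorem abs_sub_pow_six_div_le {x y L : ℝ} (hy : 1 ≤ y) (hL : 1 ≤ L)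
    (hlow : L ^ 3 * (L - 1) ^ 3 ≤ x * y) (hhigh : x * y ≤ L ^ 3 * (L - 1) * (L + 1) ^ 2) :
    |x - L ^ 6 / y| ≤ 3 * L ^ 5 := by
  have hy0 : 0 < y := by linarith
  have hnum : |x * y - L ^ 6| ≤ 3 * L ^ 5 := by
    rw [abs_le]
    constructor <;> nlinarith [pow_pos (show 0 < L by linarith) 3]
  rw [show x - L ^ 6 / y = (x * y - L ^ 6) / y by field_simp, abs_div, abs_of_pos hy0,
    div_le_iff₀ hy0]
  nlinarith [abs_nonneg (x * y - L ^ 6), pow_pos (show 0 < L by linarith) 5]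

theorem stmt_6_general (k₁ k₂ : ℕ) :
    ∃ C : ℝ, 0 < C ∧ ∀ ℓ : ℕ, ℓ.Prime → ℓ ≠ 2 →
      |(Nat.card {p : Matrix.GeneralLinearGroup (Fin 2) (ZMod ℓ) ×
            Matrix.GeneralLinearGroup (Fin 2) (ZMod ℓ) //
          (∃ v : (ZMod ℓ)ˣ,
            (p.1 : Matrix (Fin 2) (Fin 2) (ZMod ℓ)).det = (v : ZMod ℓ) ^ (k₁ - 1) ∧
            (p.2 : Matrix (Fin 2) (Fin 2) (ZMod ℓ)).det = (v : ZMod ℓ) ^ (k₂ - 1)) ∧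
          Matrix.trace (p.1 : Matrix (Fin 2) (Fin 2) (ZMod ℓ)) =
            Matrix.trace (p.2 : Matrix (Fin 2) (Fin 2) (ZMod ℓ))} : ℝ) -
        (ℓ : ℝ) ^ 6 / (Nat.gcd (ℓ - 1) (Nat.gcd (k₁ - 1) (k₂ - 1)) : ℝ)| ≤
      C * (ℓ : ℝ) ^ 5 := by
  refine ⟨3, by norm_num, fun ℓ hℓ _ => ?_⟩
  have : Fact ℓ.Prime := ⟨hℓ⟩
  have hℓ1 : 1 ≤ ℓ := hℓ.one_lt.le
  have hgcd : 1 ≤ (ℓ - 1).gcd ((k₁ - 1).gcd (k₂ - 1)) :=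
    Nat.gcd_pos_of_pos_left _ (Nat.sub_pos_of_lt hℓ.one_lt)
  obtain ⟨hlow, hhigh⟩ :=
    GeneralLinearGroup.card_detPowTraceEqPairs_mul_gcd_bounds (K := ZMod ℓ) (k₁ - 1) (k₂ - 1)
  rw [ZMod.card] at hlow hhigh
  replace hlow := (Nat.cast_le (α := ℝ)).mpr hlow
  replace hhigh := (Nat.cast_le (α := ℝ)).mpr hhigh
  push_cast [Nat.cast_sub hℓ1] at hlow hhigh
  exact abs_sub_pow_six_div_le (by exact_mod_cast hgcd) (by exact_mod_cast hℓ1) hlow hhigh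

/-- Fix k₁, k₂ ≥ 2. There is C > 0 (depending only on k₁, k₂) such that for every
odd prime ℓ, | |𝒞_ℓ| − ℓ⁶/λ₁ | ≤ C·ℓ⁵, where λ₁ = gcd(ℓ − 1, k₁ − 1, k₂ − 1) and
𝒞_ℓ = {(A,B) ∈ 𝒜_ℓ : tr A = tr B}. -/
theorem stmt_6 (k₁ k₂ : ℕ) (hk₁ : 2 ≤ k₁) (hk₂ : 2 ≤ k₂) :
    ∃ C : ℝ, 0 < C ∧ ∀ ℓ : ℕ, ℓ.Prime → ℓ ≠ 2 →
      |(Nat.card {p : Matrix.GeneralLinearGroup (Fin 2) (ZMod ℓ) ×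
            Matrix.GeneralLinearGroup (Fin 2) (ZMod ℓ) //
          (∃ v : (ZMod ℓ)ˣ,
            (p.1 : Matrix (Fin 2) (Fin 2) (ZMod ℓ)).det = (v : ZMod ℓ) ^ (k₁ - 1) ∧
            (p.2 : Matrix (Fin 2) (Fin 2) (ZMod ℓ)).det = (v : ZMod ℓ) ^ (k₂ - 1)) ∧
          Matrix.trace (p.1 : Matrix (Fin 2) (Fin 2) (ZMod ℓ)) =
            Matrix.trace (p.2 : Matrix (Fin 2) (Fin 2) (ZMod ℓ))} : ℝ) -
        (ℓ : ℝ) ^ 6 / (Nat.gcd (ℓ - 1) (Nat.gcd (k₁ - 1) (k₂ - 1)) : ℝ)| ≤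
      C * (ℓ : ℝ) ^ 5 :=
  stmt_6_general k₁ k₂
end

section
/- Let ℓ be an odd prime, d a unit of ℤ/ℓ²ℤ, and t ∈ ℤ/ℓ²ℤ. Then the number of matrices γ ∈ GL₂(ℤ/ℓ²ℤ) with det(γ) = d and tr(γ) = t equals: ℓ⁴ + ℓ³ − ℓ² if t² − 4d = 0; ℓ⁴ − ℓ² if t² − 4d ≠ 0 and ℓ divides t² − 4d; ℓ⁴ + ℓ³ if t² − 4d is a quadratic residue; and ℓ⁴ − ℓ³ if t² − 4d is a quadratic non-residue. -/
set_option maxHeartbeats 1000000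

/-!
Since `2` is invertible, `!![a, b; c, e] ↦ (a - e, 2b, 2c)` identifies the matrices of determinant
`d` and trace `t` with the triples `(x, b', c')` such that `b'c' = Δ - x²`, where `Δ = t² - 4d`.
In `R = ℤ/ℓ²ℤ`, a local ring whose maximal ideal `𝔪 = (ℓ)` has square zero, an element `y` has
`|Rˣ|` factorizations `y = b'c'` if it is a unit, `2|Rˣ|` if `0 ≠ y ∈ 𝔪`, and `|𝔪|² + 2|Rˣ|` if
`y = 0`. Summing over `x`, the count is `|R||Rˣ| + |Rˣ| A + |𝔪|² B` with
`A = #{x | x² ≡ Δ mod 𝔪}` and `B = #{x | x² = Δ}`, and these are read off case by case: for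
`Δ = u²` the solutions are `x ≡ ±u` and `x = ±u`, while a unit `Δ` that is a square mod `𝔪` is
a square, since one Newton step `x ↦ x + (Δ - x²)/(2x)` is exact when `𝔪² = 0`.
-/

section CommRing

variable {R : Type*} [CommRing R]

theorem card_subtype_eq_card_and_add_card_and_not {α : Type*} [Finite α] (p q : α → Prop) :
    Nat.card {x // p x} = Nat.card {x // p x ∧ q x} + Nat.card {x // p x ∧ ¬q x} := by
  classical
  rw [← Nat.card_sum]
  exact Nat.card_congr ((Equiv.sumCompl fun x : {x // p x} => q x).symm.trans
    ((Equiv.subtypeSubtypeEquivSubtypeInter p q).sumCongr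
      (Equiv.subtypeSubtypeEquivSubtypeInter p fun x => ¬q x)))

theorem Units.card_subtype_val {M : Type*} [Monoid M] (P : M → Prop)
    (h : ∀ m, P m → IsUnit m) : Nat.card {u : Mˣ // P u} = Nat.card {m // P m} :=
  Nat.card_congr
    { toFun u := ⟨u.1, u.2⟩
      invFun m := ⟨(h m m.2).unit, by simpa using m.2⟩
      left_inv u := by ext; simp
      right_inv m := by ext; simp }

theorem card_sq_eq_eq_zero_of_isUnit {M : Type*} [Monoid M] {Δ : M} (hΔ : IsUnit Δ)
    (hns : ¬∃ u : Mˣ, Δ = u ^ 2) : Nat.card {x : M // x ^ 2 = Δ} = 0 := by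
  have : IsEmpty {x : M // x ^ 2 = Δ} := (isEmpty_subtype _).2 fun x hx => by
    have hx' : IsUnit x := (isUnit_pow_iff two_ne_zero).1 (hx ▸ hΔ)
    exact hns ⟨hx'.unit, by simp [hx]⟩
  exact Nat.card_of_isEmpty

def detTraceEquiv [Invertible (2 : R)] (d t : R) :
    {M : Matrix (Fin 2) (Fin 2) R // M.det = d ∧ M.trace = t} ≃
      Σ x : R, {q : R × R // q.1 * q.2 = t ^ 2 - 4 * d - x ^ 2} where
  toFun M := ⟨M.1 0 0 - M.1 1 1, (2 * M.1 0 1, 2 * M.1 1 0), by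
    obtain ⟨M, hdet, htr⟩ := M
    rw [Matrix.det_fin_two] at hdet
    rw [Matrix.trace_fin_two] at htr
    linear_combination -4 * hdet + (M 0 0 + M 1 1 + t) * htr⟩
  invFun p := ⟨!![⅟2 * (t + p.1), ⅟2 * p.2.1.1; ⅟2 * p.2.1.2, ⅟2 * (t - p.1)], by
    obtain ⟨x, ⟨b, c⟩, hq⟩ := p
    have h := invOf_mul_self (2 : R)
    constructor
    · rw [Matrix.det_fin_two_of]
      linear_combination -(⅟2 : R) ^ 2 * hq + d * (⅟2 * 2 + 1) * h
    · rw [Matrix.trace_fin_two_of]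
      linear_combination t * h⟩
  left_inv M := by
    obtain ⟨M, -, htr⟩ := M
    rw [Matrix.trace_fin_two] at htr
    have h := invOf_mul_self (2 : R)
    ext i j
    fin_cases i <;> fin_cases j <;>
      simp only [Fin.zero_eta, Fin.mk_one, Fin.isValue, Matrix.of_apply, Matrix.cons_val',
        Matrix.cons_val_zero, Matrix.cons_val_one, Matrix.cons_val_fin_one, invOf_mul_cancel_left']
    · linear_combination M 0 0 * h - ⅟2 * htr
    · linear_combination M 1 1 * h - ⅟2 * htr
  right_inv p := by
    obtain ⟨x, ⟨b, c⟩, -⟩ := p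
    have h := invOf_mul_self (2 : R)
    refine Sigma.subtype_ext ?_ ?_
    · simp only [Fin.isValue, Matrix.of_apply, Matrix.cons_val', Matrix.cons_val_zero,
        Matrix.cons_val_fin_one, Matrix.cons_val_one]
      linear_combination x * h
    · simp only [Fin.isValue, Matrix.of_apply, Matrix.cons_val', Matrix.cons_val_one,
        Matrix.cons_val_fin_one, Matrix.cons_val_zero, mul_invOf_cancel_left']

theorem card_det_trace_eq_sum [Fintype R] [Invertible (2 : R)] (d t : R) :
    Nat.card {M : Matrix (Fin 2) (Fin 2) R // M.det = d ∧ M.trace = t} =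
      ∑ x : R, Nat.card {q : R × R // q.1 * q.2 = t ^ 2 - 4 * d - x ^ 2} := by
  rw [Nat.card_congr (detTraceEquiv d t), Nat.card_sigma]

theorem card_mul_eq_and_isUnit_fst (y : R) :
    Nat.card {q : R × R // q.1 * q.2 = y ∧ IsUnit q.1} = Nat.card Rˣ :=
  Eq.symm <| Nat.card_congr (α := Rˣ)
    { toFun u := ⟨(u, ↑u⁻¹ * y), by simp, u.isUnit⟩
      invFun q := q.2.2.unit
      left_inv u := by ext; simp
      right_inv := by
        rintro ⟨⟨b, c⟩, rfl, hb⟩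
        ext
        · simp
        · simp [← mul_assoc] }

theorem card_mul_eq_and_isUnit_snd (y : R) :
    Nat.card {q : R × R // q.1 * q.2 = y ∧ IsUnit q.2} = Nat.card Rˣ := by
  rw [← card_mul_eq_and_isUnit_fst y]
  exact Nat.card_congr ((Equiv.prodComm R R).subtypeEquiv fun q => by simp [mul_comm])

end CommRing

namespace IsLocalRing

variable {R : Type*} [CommRing R] [IsLocalRing R]

theorem mul_eq_zero_of_mem_maximalIdeal (h𝔪 : maximalIdeal R ^ 2 = ⊥) {a b : R}
    (ha : a ∈ maximalIdeal R) (hb : b ∈ maximalIdeal R) : a * b = 0 := by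
  have hab := Ideal.mul_mem_mul ha hb
  rwa [← sq, h𝔪, Ideal.mem_bot] at hab

theorem card_units_add_card_maximalIdeal [Finite R] :
    Nat.card Rˣ + Nat.card (maximalIdeal R) = Nat.card R := by
  classical
  rw [← Nat.card_congr (Equiv.subtypeUnivEquiv fun u : Rˣ => u.isUnit),
    Units.card_subtype_val IsUnit fun _ h => h, ← Nat.card_sum]
  exact Nat.card_congr (Equiv.sumCompl IsUnit)

open Classical in
theorem card_mul_eq [Finite R] (h𝔪 : maximalIdeal R ^ 2 = ⊥) (y : R) :
    Nat.card {q : R × R // q.1 * q.2 = y} =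
      Nat.card Rˣ + (if y ∈ maximalIdeal R then Nat.card Rˣ else 0) +
        (if y = 0 then Nat.card (maximalIdeal R) ^ 2 else 0) := by
  rw [card_subtype_eq_card_and_add_card_and_not _ fun q : R × R => IsUnit q.1,
    card_mul_eq_and_isUnit_fst, card_subtype_eq_card_and_add_card_and_not _
      fun q : R × R => IsUnit q.2, add_assoc]
  congr 2
  · split_ifs with hy
    · rw [← card_mul_eq_and_isUnit_snd y]
      refine Nat.card_congr (Equiv.subtypeEquivRight fun q => ?_)
      exact ⟨fun h => ⟨h.1.1, h.2⟩, fun ⟨hq, hc⟩ => ⟨⟨hq, fun hb => hy (hq ▸ hb.mul hc)⟩, hc⟩⟩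
    · have : IsEmpty {q : R × R // (q.1 * q.2 = y ∧ ¬IsUnit q.1) ∧ IsUnit q.2} :=
        (isEmpty_subtype _).2 fun q ⟨⟨hq, hb⟩, _⟩ => hy (hq ▸ Ideal.mul_mem_right q.2 _ hb)
      exact Nat.card_of_isEmpty
  · split_ifs with hy
    · subst hy
      rw [sq, ← Nat.card_prod]
      refine Nat.card_congr ((Equiv.subtypeEquivRight fun q => ?_).trans
        (Equiv.subtypeProdEquivProd (p := (· ∈ maximalIdeal R)) (q := (· ∈ maximalIdeal R))))
      exact ⟨fun ⟨⟨_, hb⟩, hc⟩ => ⟨hb, hc⟩,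
        fun ⟨hb, hc⟩ => ⟨⟨mul_eq_zero_of_mem_maximalIdeal h𝔪 hb hc, hb⟩, hc⟩⟩
    · have : IsEmpty {q : R × R // (q.1 * q.2 = y ∧ ¬IsUnit q.1) ∧ ¬IsUnit q.2} :=
        (isEmpty_subtype _).2 fun q ⟨⟨hq, hb⟩, hc⟩ =>
          hy (hq ▸ mul_eq_zero_of_mem_maximalIdeal h𝔪 hb hc)
      exact Nat.card_of_isEmpty

theorem card_det_trace_eq [Fintype R] [Invertible (2 : R)] (h𝔪 : maximalIdeal R ^ 2 = ⊥)
    (d t : R) :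
    Nat.card {M : Matrix (Fin 2) (Fin 2) R // M.det = d ∧ M.trace = t} =
      Nat.card R * Nat.card Rˣ +
        Nat.card Rˣ * Nat.card {x : R // t ^ 2 - 4 * d - x ^ 2 ∈ maximalIdeal R} +
        Nat.card (maximalIdeal R) ^ 2 * Nat.card {x : R // x ^ 2 = t ^ 2 - 4 * d} := by
  classical
  rw [card_det_trace_eq_sum]
  simp only [card_mul_eq h𝔪, Finset.sum_add_distrib, Finset.sum_const, Finset.sum_ite,
    smul_eq_mul, mul_zero, add_zero, Finset.card_univ, Nat.card_eq_fintype_card,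
    Fintype.card_subtype, sub_eq_zero, @eq_comm _ (t ^ 2 - 4 * d)]
  ring

theorem card_GL_det_trace_eq [Fintype R] [Invertible (2 : R)] (h𝔪 : maximalIdeal R ^ 2 = ⊥)
    (d : Rˣ) (t : R) :
    Nat.card {γ : Matrix.GeneralLinearGroup (Fin 2) R //
        (γ : Matrix (Fin 2) (Fin 2) R).det = d ∧ Matrix.trace (γ : Matrix (Fin 2) (Fin 2) R) = t} =
      Nat.card R * Nat.card Rˣ +
        Nat.card Rˣ * Nat.card {x : R // t ^ 2 - 4 * d - x ^ 2 ∈ maximalIdeal R} +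
        Nat.card (maximalIdeal R) ^ 2 * Nat.card {x : R // x ^ 2 = t ^ 2 - 4 * d} := by
  rw [Units.card_subtype_val (fun M : Matrix (Fin 2) (Fin 2) R => M.det = d ∧ M.trace = t)
    fun M hM => (Matrix.isUnit_iff_isUnit_det M).2 (hM.1 ▸ d.isUnit), card_det_trace_eq h𝔪]

theorem sq_mem_maximalIdeal_iff {x : R} : x ^ 2 ∈ maximalIdeal R ↔ x ∈ maximalIdeal R :=
  (maximalIdeal.isMaximal R).isPrime.pow_mem_iff_mem 2 two_pos

theorem sq_eq_zero_iff_mem_maximalIdeal (h𝔪 : maximalIdeal R ^ 2 = ⊥) {x : R} :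
    x ^ 2 = 0 ↔ x ∈ maximalIdeal R :=
  ⟨fun h => sq_mem_maximalIdeal_iff.1 (h ▸ zero_mem _),
    fun h => sq x ▸ mul_eq_zero_of_mem_maximalIdeal h𝔪 h h⟩

theorem card_sq_eq_zero_eq_card_maximalIdeal (h𝔪 : maximalIdeal R ^ 2 = ⊥) :
    Nat.card {x : R // x ^ 2 = 0} = Nat.card (maximalIdeal R) :=
  Nat.card_congr (Equiv.subtypeEquivRight fun _ => sq_eq_zero_iff_mem_maximalIdeal h𝔪)

theorem card_sq_eq_eq_zero_of_mem (h𝔪 : maximalIdeal R ^ 2 = ⊥) {Δ : R}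
    (hΔ : Δ ∈ maximalIdeal R) (hΔ0 : Δ ≠ 0) : Nat.card {x : R // x ^ 2 = Δ} = 0 := by
  have : IsEmpty {x : R // x ^ 2 = Δ} := (isEmpty_subtype _).2 fun x hx =>
    hΔ0 (hx ▸ (sq_eq_zero_iff_mem_maximalIdeal h𝔪).2 (sq_mem_maximalIdeal_iff.1 (hx ▸ hΔ)))
  exact Nat.card_of_isEmpty

theorem sq_eq_sq_iff_eq_or_eq_neg_of_isUnit (h2 : IsUnit (2 : R)) {x u : R} (hu : IsUnit u) :
    x ^ 2 = u ^ 2 ↔ x = u ∨ x = -u := by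
  refine ⟨fun h => ?_, by rintro (rfl | rfl) <;> ring⟩
  have h2u : IsUnit ((x + u) + (u - x)) := by convert h2.mul hu using 1; ring
  rcases isUnit_or_isUnit_of_isUnit_add h2u with hxu | hxu
  · left
    exact sub_eq_zero.1 (hxu.mul_left_eq_zero.1 (by linear_combination h))
  · right
    exact eq_neg_of_add_eq_zero_left (hxu.mul_right_eq_zero.1 (by linear_combination -h))

theorem card_sq_eq_sq (h2 : IsUnit (2 : R)) (u : Rˣ) :
    Nat.card {x : R // x ^ 2 = u ^ 2} = 2 := by
  have hne : (u : R) ≠ -u := fun h => by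
    have h0 : (2 : R) * u = 0 := by linear_combination h
    exact not_isUnit_zero (h0 ▸ h2.mul u.isUnit)
  rw [Nat.card_congr (Equiv.subtypeEquivRight fun _ =>
    sq_eq_sq_iff_eq_or_eq_neg_of_isUnit h2 u.isUnit)]
  change Nat.card ({(u : R), -(u : R)} : Set R) = 2
  rw [Nat.card_coe_set_eq, Set.ncard_pair hne]

theorem exists_sq_eq_of_sub_sq_mem (h𝔪 : maximalIdeal R ^ 2 = ⊥) (h2 : IsUnit (2 : R))
    {Δ x : R} (hΔ : IsUnit Δ) (hx : Δ - x ^ 2 ∈ maximalIdeal R) : ∃ u : Rˣ, Δ = u ^ 2 := by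
  have hxu : IsUnit x := notMem_maximalIdeal.1 fun hx' => notMem_maximalIdeal.2 hΔ <| by
    simpa only [sub_add_cancel] using add_mem hx (sq_mem_maximalIdeal_iff.2 hx')
  obtain ⟨v, hv⟩ := h2.mul hxu
  have hv' : 2 * x * ↑v⁻¹ = (1 : R) := by rw [← hv, Units.mul_inv]
  have he : (Δ - x ^ 2) * ↑v⁻¹ ∈ maximalIdeal R := Ideal.mul_mem_right _ _ hx
  have hy : IsUnit (x + (Δ - x ^ 2) * ↑v⁻¹) :=
    notMem_maximalIdeal.1 fun hy => notMem_maximalIdeal.2 hxu <| by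
      simpa only [add_sub_cancel_right] using sub_mem hy he
  refine ⟨hy.unit, ?_⟩
  rw [hy.unit_spec]
  linear_combination -(Δ - x ^ 2) * hv' -
    (↑v⁻¹ : R) ^ 2 * mul_eq_zero_of_mem_maximalIdeal h𝔪 hx hx

theorem card_sub_sq_mem_of_mem {Δ : R} (hΔ : Δ ∈ maximalIdeal R) :
    Nat.card {x : R // Δ - x ^ 2 ∈ maximalIdeal R} = Nat.card (maximalIdeal R) :=
  Nat.card_congr (Equiv.subtypeEquivRight fun _ => by
    rw [Submodule.sub_mem_iff_right _ hΔ, sq_mem_maximalIdeal_iff])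

theorem card_sq_sub_sq_mem [Finite R] (h2 : IsUnit (2 : R)) (u : Rˣ) :
    Nat.card {x : R // (u : R) ^ 2 - x ^ 2 ∈ maximalIdeal R} = 2 * Nat.card (maximalIdeal R) := by
  classical
  have hdisj : Disjoint (fun x : R => (u : R) - x ∈ maximalIdeal R)
      (fun x => (u : R) + x ∈ maximalIdeal R) := by
    rw [disjoint_iff_inf_le]
    rintro x ⟨h₁, h₂⟩
    have : (2 : R) * u ∈ maximalIdeal R := by
      convert add_mem h₁ h₂ using 1; ring
    exact this (h2.mul u.isUnit)
  have hfactor : ∀ x : R, (u : R) ^ 2 - x ^ 2 ∈ maximalIdeal R ↔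
      (u : R) - x ∈ maximalIdeal R ∨ (u : R) + x ∈ maximalIdeal R := fun x => by
    rw [← (maximalIdeal.isMaximal R).isPrime.mul_mem_iff_mem_or_mem]; ring_nf
  have hsub : Nat.card {x : R // (u : R) - x ∈ maximalIdeal R} = Nat.card (maximalIdeal R) :=
    Nat.card_congr ((Equiv.subLeft (u : R)).subtypeEquiv fun _ => Iff.rfl)
  have hadd : Nat.card {x : R // (u : R) + x ∈ maximalIdeal R} = Nat.card (maximalIdeal R) :=
    Nat.card_congr ((Equiv.addLeft (u : R)).subtypeEquiv fun _ => Iff.rfl)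
  rw [Nat.card_congr ((Equiv.subtypeEquivRight hfactor).trans (subtypeOrEquiv _ _ hdisj)),
    Nat.card_sum, hsub, hadd, two_mul]

theorem card_sub_sq_mem_eq_zero_of_isUnit (h𝔪 : maximalIdeal R ^ 2 = ⊥) (h2 : IsUnit (2 : R))
    {Δ : R} (hΔ : IsUnit Δ) (hns : ¬∃ u : Rˣ, Δ = u ^ 2) :
    Nat.card {x : R // Δ - x ^ 2 ∈ maximalIdeal R} = 0 := by
  have : IsEmpty {x : R // Δ - x ^ 2 ∈ maximalIdeal R} := (isEmpty_subtype _).2 fun _ hx =>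
    hns (exists_sq_eq_of_sub_sq_mem h𝔪 h2 hΔ hx)
  exact Nat.card_of_isEmpty

end IsLocalRing

namespace ZMod

open IsLocalRing

variable {ℓ : ℕ} [Fact ℓ.Prime]

theorem isUnit_iff_not_natCast_dvd {n : ℕ} (hn : n ≠ 0) (x : ZMod (ℓ ^ n)) :
    IsUnit x ↔ ¬(ℓ : ZMod (ℓ ^ n)) ∣ x := by
  have hℓ : ℓ.Prime := Fact.out
  constructor
  · rintro hx ⟨y, rfl⟩
    exact prime_natCast_not_isUnit_pow hℓ (Nat.pos_of_ne_zero hn) (isUnit_of_mul_isUnit_left hx)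
  · intro h
    rw [← natCast_zmod_val x, isUnit_natCast_iff_not_dvd_pow hℓ (Nat.pos_of_ne_zero hn)]
    exact fun hdvd => h (by simpa using Nat.cast_dvd_cast (α := ZMod (ℓ ^ n)) hdvd)

instance {n : ℕ} [NeZero n] : IsLocalRing (ZMod (ℓ ^ n)) :=
  have : Fact (1 < ℓ ^ n) := ⟨Nat.one_lt_pow (NeZero.ne n) (Fact.out : ℓ.Prime).one_lt⟩
  .of_nonunits_add fun a b ha hb => by
    simp only [mem_nonunits_iff, isUnit_iff_not_natCast_dvd (NeZero.ne n), not_not] at *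
    exact dvd_add ha hb

theorem mem_maximalIdeal_iff {n : ℕ} [NeZero n] {x : ZMod (ℓ ^ n)} :
    x ∈ maximalIdeal (ZMod (ℓ ^ n)) ↔ (ℓ : ZMod (ℓ ^ n)) ∣ x := by
  rw [mem_maximalIdeal, mem_nonunits_iff, isUnit_iff_not_natCast_dvd (NeZero.ne n), not_not]

theorem maximalIdeal_sq_eq_bot : maximalIdeal (ZMod (ℓ ^ 2)) ^ 2 = ⊥ := by
  have : maximalIdeal (ZMod (ℓ ^ 2)) = Ideal.span {(ℓ : ZMod (ℓ ^ 2))} := by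
    ext; rw [mem_maximalIdeal_iff, Ideal.mem_span_singleton]
  rw [this, Ideal.span_singleton_pow, ← Nat.cast_pow, natCast_self, Ideal.span_singleton_eq_bot]

theorem card_units_prime_sq : Nat.card (ZMod (ℓ ^ 2))ˣ = ℓ ^ 2 - ℓ := by
  rw [Nat.card_eq_fintype_card, card_units_eq_totient, Nat.totient_prime_pow_succ Fact.out,
    pow_one, Nat.mul_sub_one, sq]

theorem card_maximalIdeal_prime_sq : Nat.card (maximalIdeal (ZMod (ℓ ^ 2))) = ℓ := by
  have h := card_units_add_card_maximalIdeal (R := ZMod (ℓ ^ 2))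
  rw [card_units_prime_sq, Nat.card_zmod] at h
  have : ℓ ≤ ℓ ^ 2 := Nat.le_self_pow two_ne_zero ℓ
  omega

end ZMod

/-- For an odd prime ℓ, a unit d of ℤ/ℓ²ℤ and t ∈ ℤ/ℓ²ℤ, the number of matrices
γ ∈ GL₂(ℤ/ℓ²ℤ) with det γ = d and tr γ = t is: ℓ⁴ + ℓ³ − ℓ² if t² − 4d = 0;
ℓ⁴ − ℓ² if t² − 4d ≠ 0 and ℓ ∣ t² − 4d; ℓ⁴ + ℓ³ if t² − 4d is a quadratic residue;
ℓ⁴ − ℓ³ if t² − 4d is a quadratic non-residue. -/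
theorem stmt_7 (ℓ : ℕ) (hℓ : ℓ.Prime) (hℓodd : ℓ ≠ 2)
    (d : (ZMod (ℓ ^ 2))ˣ) (t : ZMod (ℓ ^ 2)) :
    (t ^ 2 - 4 * (d : ZMod (ℓ ^ 2)) = 0 →
      Nat.card {γ : Matrix.GeneralLinearGroup (Fin 2) (ZMod (ℓ ^ 2)) //
          (γ : Matrix (Fin 2) (Fin 2) (ZMod (ℓ ^ 2))).det = (d : ZMod (ℓ ^ 2)) ∧
          Matrix.trace (γ : Matrix (Fin 2) (Fin 2) (ZMod (ℓ ^ 2))) = t} =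
        ℓ ^ 4 + ℓ ^ 3 - ℓ ^ 2) ∧
    ((t ^ 2 - 4 * (d : ZMod (ℓ ^ 2)) ≠ 0 ∧
        (ℓ : ZMod (ℓ ^ 2)) ∣ t ^ 2 - 4 * (d : ZMod (ℓ ^ 2))) →
      Nat.card {γ : Matrix.GeneralLinearGroup (Fin 2) (ZMod (ℓ ^ 2)) //
          (γ : Matrix (Fin 2) (Fin 2) (ZMod (ℓ ^ 2))).det = (d : ZMod (ℓ ^ 2)) ∧
          Matrix.trace (γ : Matrix (Fin 2) (Fin 2) (ZMod (ℓ ^ 2))) = t} =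
        ℓ ^ 4 - ℓ ^ 2) ∧
    ((∃ u : (ZMod (ℓ ^ 2))ˣ, t ^ 2 - 4 * (d : ZMod (ℓ ^ 2)) = (u : ZMod (ℓ ^ 2)) ^ 2) →
      Nat.card {γ : Matrix.GeneralLinearGroup (Fin 2) (ZMod (ℓ ^ 2)) //
          (γ : Matrix (Fin 2) (Fin 2) (ZMod (ℓ ^ 2))).det = (d : ZMod (ℓ ^ 2)) ∧
          Matrix.trace (γ : Matrix (Fin 2) (Fin 2) (ZMod (ℓ ^ 2))) = t} =
        ℓ ^ 4 + ℓ ^ 3) ∧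
    ((IsUnit (t ^ 2 - 4 * (d : ZMod (ℓ ^ 2))) ∧
        ¬∃ u : (ZMod (ℓ ^ 2))ˣ, t ^ 2 - 4 * (d : ZMod (ℓ ^ 2)) = (u : ZMod (ℓ ^ 2)) ^ 2) →
      Nat.card {γ : Matrix.GeneralLinearGroup (Fin 2) (ZMod (ℓ ^ 2)) //
          (γ : Matrix (Fin 2) (Fin 2) (ZMod (ℓ ^ 2))).det = (d : ZMod (ℓ ^ 2)) ∧
          Matrix.trace (γ : Matrix (Fin 2) (Fin 2) (ZMod (ℓ ^ 2))) = t} =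
        ℓ ^ 4 - ℓ ^ 3) := by
  have : Fact ℓ.Prime := ⟨hℓ⟩
  have h2 : IsUnit (2 : ZMod (ℓ ^ 2)) := by
    exact_mod_cast (ZMod.isUnit_natCast_iff_not_dvd_pow hℓ two_pos (a := 2)).2
      fun h => hℓodd ((Nat.prime_dvd_prime_iff_eq hℓ Nat.prime_two).1 h)
  let : Invertible (2 : ZMod (ℓ ^ 2)) := h2.invertible
  have h𝔪 := ZMod.maximalIdeal_sq_eq_bot (ℓ := ℓ)
  rw [IsLocalRing.card_GL_det_trace_eq h𝔪, Nat.card_zmod, ZMod.card_units_prime_sq,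
    ZMod.card_maximalIdeal_prime_sq]
  have h₁ : ℓ ≤ ℓ ^ 2 := Nat.le_self_pow two_ne_zero ℓ
  have h₂ : ℓ ^ 2 ≤ ℓ ^ 3 := Nat.pow_le_pow_right hℓ.pos (by norm_num)
  have h₃ : ℓ ^ 3 ≤ ℓ ^ 4 := Nat.pow_le_pow_right hℓ.pos (by norm_num)
  refine ⟨fun hΔ => ?_, fun ⟨hΔ0, hΔ⟩ => ?_, fun ⟨u, hΔ⟩ => ?_, fun ⟨hΔ, hns⟩ => ?_⟩
  · rw [hΔ, IsLocalRing.card_sub_sq_mem_of_mem (zero_mem _),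
      IsLocalRing.card_sq_eq_zero_eq_card_maximalIdeal h𝔪, ZMod.card_maximalIdeal_prime_sq]
    zify [h₁, h₂.trans (Nat.le_add_left _ _)]
    ring
  · have hΔ𝔪 := ZMod.mem_maximalIdeal_iff.2 hΔ
    rw [IsLocalRing.card_sub_sq_mem_of_mem hΔ𝔪,
      IsLocalRing.card_sq_eq_eq_zero_of_mem h𝔪 hΔ𝔪 hΔ0, ZMod.card_maximalIdeal_prime_sq]
    zify [h₁, h₂.trans h₃]
    ring
  · rw [hΔ, IsLocalRing.card_sq_sub_sq_mem h2, IsLocalRing.card_sq_eq_sq h2,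
      ZMod.card_maximalIdeal_prime_sq]
    zify [h₁]
    ring
  · rw [IsLocalRing.card_sub_sq_mem_eq_zero_of_isUnit h𝔪 h2 hΔ hns,
      card_sq_eq_eq_zero_of_isUnit hΔ hns]
    zify [h₁, h₃]
    ring
end

section
/- Let ℓ be an odd prime, d a unit of ℤ/ℓ²ℤ, and t ∈ ℤ/ℓ²ℤ. Then the number of elements a ∈ ℤ/ℓ²ℤ such that a² − at + d ≠ 0 but ℓ divides a² − at + d equals: 0 if t² − 4d = 0; ℓ if t² − 4d ≠ 0 and ℓ divides t² − 4d; 2(ℓ − 1) if t² − 4d is a quadratic residue; and 0 if t² − 4d is a quadratic non-residue. -/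
namespace Stmt9Aux

/-- The reduction map `ZMod (ℓ^2) →+* ZMod ℓ`. -/
def pi (ℓ : ℕ) : ZMod (ℓ ^ 2) →+* ZMod ℓ :=
  ZMod.castHom (dvd_pow_self ℓ two_ne_zero) (ZMod ℓ)

variable {ℓ : ℕ}

lemma lsq : (ℓ : ZMod (ℓ ^ 2)) * (ℓ : ZMod (ℓ ^ 2)) = 0 := by
  rw [← Nat.cast_mul, ← sq, ZMod.natCast_self]

lemma pi_val (hℓ : ℓ.Prime) (x : ZMod (ℓ ^ 2)) :
    pi ℓ x = ((x.val : ℕ) : ZMod ℓ) := by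
  haveI : NeZero (ℓ ^ 2) := ⟨pow_ne_zero 2 hℓ.ne_zero⟩
  rw [pi, ZMod.castHom_apply, ← ZMod.natCast_val]

lemma pi_eq_zero_iff (hℓ : ℓ.Prime) (x : ZMod (ℓ ^ 2)) :
    pi ℓ x = 0 ↔ ℓ ∣ x.val := by
  rw [pi_val hℓ, ZMod.natCast_eq_zero_iff]

lemma dvd_iff (hℓ : ℓ.Prime) (x : ZMod (ℓ ^ 2)) :
    (ℓ : ZMod (ℓ ^ 2)) ∣ x ↔ pi ℓ x = 0 := by
  haveI : NeZero (ℓ ^ 2) := ⟨pow_ne_zero 2 hℓ.ne_zero⟩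
  constructor
  · rintro ⟨y, rfl⟩
    simp [pi, map_mul, map_natCast]
  · intro h
    obtain ⟨q, hq⟩ := (pi_eq_zero_iff hℓ x).1 h
    refine ⟨(q : ZMod (ℓ ^ 2)), ?_⟩
    have hx : x = ((x.val : ℕ) : ZMod (ℓ ^ 2)) := by
      rw [ZMod.natCast_val, ZMod.cast_id]
    rw [hx, hq]; push_cast; ring

lemma sq_zero (hℓ : ℓ.Prime) {x : ZMod (ℓ ^ 2)} (h : pi ℓ x = 0) : x ^ 2 = 0 := by
  obtain ⟨y, rfl⟩ := (dvd_iff hℓ x).2 h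
  have := lsq (ℓ := ℓ)
  linear_combination (y ^ 2 : ZMod (ℓ ^ 2)) * this

lemma isUnit_of_pi_ne (hℓ : ℓ.Prime) {x : ZMod (ℓ ^ 2)} (h : pi ℓ x ≠ 0) : IsUnit x := by
  haveI : NeZero (ℓ ^ 2) := ⟨pow_ne_zero 2 hℓ.ne_zero⟩
  have hnd : ¬ ℓ ∣ x.val := fun hd => h ((pi_eq_zero_iff hℓ x).2 hd)
  have hco : (x.val).Coprime (ℓ ^ 2) :=
    Nat.Coprime.pow_right 2 ((hℓ.coprime_iff_not_dvd.2 hnd).symm)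
  have := (ZMod.isUnit_iff_coprime x.val (ℓ ^ 2)).2 hco
  rwa [ZMod.natCast_val, ZMod.cast_id] at this

lemma card_fiber (hℓ : ℓ.Prime) (c : ZMod ℓ) :
    Nat.card {b : ZMod (ℓ ^ 2) // pi ℓ b = c} = ℓ := by
  haveI : Fact ℓ.Prime := ⟨hℓ⟩
  haveI : NeZero (ℓ ^ 2) := ⟨pow_ne_zero 2 hℓ.ne_zero⟩
  obtain ⟨b₀, hb₀⟩ := ZMod.ringHom_surjective (pi ℓ) c
  have hpil : pi ℓ ((ℓ : ℕ) : ZMod (ℓ ^ 2)) = 0 := by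
    simp [pi, map_natCast]
  let f : ZMod ℓ → {b : ZMod (ℓ ^ 2) // pi ℓ b = c} := fun k =>
    ⟨b₀ + (ℓ : ZMod (ℓ ^ 2)) * (k.val : ZMod (ℓ ^ 2)), by
      simp [map_add, map_mul, hpil, hb₀]⟩
  have hinj : Function.Injective f := by
    intro k₁ k₂ h
    have h1 : (ℓ : ZMod (ℓ ^ 2)) * (k₁.val : ZMod (ℓ ^ 2))
        = (ℓ : ZMod (ℓ ^ 2)) * (k₂.val : ZMod (ℓ ^ 2)) := by
      have := congrArg Subtype.val h
      simpa [f] using this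
    have hlt : ∀ k : ZMod ℓ, ℓ * k.val < ℓ ^ 2 := by
      intro k
      have hv := ZMod.val_lt k
      calc ℓ * k.val < ℓ * ℓ := (Nat.mul_lt_mul_left hℓ.pos).mpr hv
        _ = ℓ ^ 2 := (sq ℓ).symm
    have h2 : ((ℓ * k₁.val : ℕ) : ZMod (ℓ ^ 2)) = ((ℓ * k₂.val : ℕ) : ZMod (ℓ ^ 2)) := by
      push_cast; exact h1
    have h3 : ℓ * k₁.val = ℓ * k₂.val := by
      have := congrArg ZMod.val h2
      rwa [ZMod.val_cast_of_lt (hlt k₁), ZMod.val_cast_of_lt (hlt k₂)] at this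
    exact ZMod.val_injective ℓ (Nat.eq_of_mul_eq_mul_left hℓ.pos h3)
  have hsurj : Function.Surjective f := by
    rintro ⟨b, hb⟩
    have h0 : pi ℓ (b - b₀) = 0 := by rw [map_sub, hb, hb₀, sub_self]
    obtain ⟨q, hq⟩ := (pi_eq_zero_iff hℓ _).1 h0
    have hqlt : q < ℓ := by
      have := ZMod.val_lt (b - b₀)
      rw [hq, sq] at this
      exact lt_of_mul_lt_mul_left this (Nat.zero_le ℓ)
    refine ⟨(q : ZMod ℓ), ?_⟩
    apply Subtype.ext
    have hqv : ((q : ZMod ℓ)).val = q := ZMod.val_cast_of_lt hqlt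
    show b₀ + (ℓ : ZMod (ℓ ^ 2)) * _ = b
    rw [hqv]
    have hbb : ((ℓ * q : ℕ) : ZMod (ℓ ^ 2)) = b - b₀ := by
      rw [← hq, ZMod.natCast_val, ZMod.cast_id]
    push_cast at hbb
    rw [hbb]; ring
  have : Nat.card (ZMod ℓ) = Nat.card {b : ZMod (ℓ ^ 2) // pi ℓ b = c} :=
    Nat.card_congr (Equiv.ofBijective f ⟨hinj, hsurj⟩)
  rw [← this, Nat.card_zmod]

lemma card_fiber_ne (hℓ : ℓ.Prime) (b₀ : ZMod (ℓ ^ 2)) :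
    Nat.card {b : ZMod (ℓ ^ 2) // pi ℓ b = pi ℓ b₀ ∧ b ≠ b₀} = ℓ - 1 := by
  haveI : NeZero (ℓ ^ 2) := ⟨pow_ne_zero 2 hℓ.ne_zero⟩
  classical
  have hfe : (Finset.univ.filter fun b : ZMod (ℓ ^ 2) => pi ℓ b = pi ℓ b₀ ∧ b ≠ b₀)
      = (Finset.univ.filter fun b : ZMod (ℓ ^ 2) => pi ℓ b = pi ℓ b₀).erase b₀ := by
    ext b
    simp [Finset.mem_erase, and_comm]
  have hmem : b₀ ∈ Finset.univ.filter fun b : ZMod (ℓ ^ 2) => pi ℓ b = pi ℓ b₀ := by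
    simp
  have hcard : (Finset.univ.filter fun b : ZMod (ℓ ^ 2) => pi ℓ b = pi ℓ b₀).card = ℓ := by
    have := card_fiber hℓ (pi ℓ b₀)
    rwa [Nat.card_eq_fintype_card, Fintype.card_subtype] at this
  rw [Nat.card_eq_fintype_card, Fintype.card_subtype, hfe,
    Finset.card_erase_of_mem hmem, hcard]

lemma two_isUnit (hℓ : ℓ.Prime) (hℓodd : ℓ ≠ 2) : IsUnit (2 : ZMod (ℓ ^ 2)) := by
  have hco : Nat.Coprime 2 (ℓ ^ 2) :=
    Nat.Coprime.pow_right 2 ((Nat.coprime_primes Nat.prime_two hℓ).2 (Ne.symm hℓodd))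
  have := (ZMod.isUnit_iff_coprime 2 (ℓ ^ 2)).2 hco
  simpa using this

lemma sq_eq_sq_units (hℓ : ℓ.Prime) (hℓodd : ℓ ≠ 2) (u : (ZMod (ℓ ^ 2))ˣ)
    {b : ZMod (ℓ ^ 2)} (h : b ^ 2 = (u : ZMod (ℓ ^ 2)) ^ 2) :
    b = (u : ZMod (ℓ ^ 2)) ∨ b = -(u : ZMod (ℓ ^ 2)) := by
  haveI : Fact ℓ.Prime := ⟨hℓ⟩
  have hfac : (b - u) * (b + u) = 0 := by linear_combination h
  have hpfac : pi ℓ (b - u) * pi ℓ (b + u) = 0 := by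
    rw [← map_mul, hfac, map_zero]
  have h2u : pi ℓ (2 * (u : ZMod (ℓ ^ 2))) ≠ 0 :=
    (((two_isUnit hℓ hℓodd).mul u.isUnit).map (pi ℓ)).ne_zero
  have hkey : (b + (u : ZMod (ℓ ^ 2))) - (b - u) = 2 * u := by ring
  rcases mul_eq_zero.1 hpfac with h0 | h0
  · left
    have hne : pi ℓ (b + u) ≠ 0 := by
      intro h1
      exact h2u (by rw [← hkey, map_sub, h0, h1, sub_zero])
    have hu' : IsUnit (b + (u : ZMod (ℓ ^ 2))) := isUnit_of_pi_ne hℓ hne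
    exact sub_eq_zero.1 ((hu'.mul_left_eq_zero).1 hfac)
  · right
    have hne : pi ℓ (b - u) ≠ 0 := by
      intro h1
      exact h2u (by rw [← hkey, map_sub, h0, h1, sub_zero])
    have hu' : IsUnit (b - (u : ZMod (ℓ ^ 2))) := isUnit_of_pi_ne hℓ hne
    have h2 : (b + u) * (b - u) = 0 := by linear_combination hfac
    exact eq_neg_of_add_eq_zero_left ((hu'.mul_left_eq_zero).1 h2)


lemma caseA (hℓ : ℓ.Prime) (D : ZMod (ℓ ^ 2)) (hD : D = 0) :
    Nat.card {b : ZMod (ℓ ^ 2) // b ^ 2 ≠ D ∧ (pi ℓ b) ^ 2 = pi ℓ D} = 0 := by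
  haveI : Fact ℓ.Prime := ⟨hℓ⟩
  subst hD
  have : IsEmpty {b : ZMod (ℓ ^ 2) // b ^ 2 ≠ 0 ∧ (pi ℓ b) ^ 2 = pi ℓ 0} := by
    constructor
    rintro ⟨b, h1, h2⟩
    rw [map_zero] at h2
    exact h1 (sq_zero hℓ ((pow_eq_zero_iff two_ne_zero).1 h2))
  exact Nat.card_of_isEmpty

lemma caseB (hℓ : ℓ.Prime) (D : ZMod (ℓ ^ 2)) (hne : D ≠ 0) (h0 : pi ℓ D = 0) :
    Nat.card {b : ZMod (ℓ ^ 2) // b ^ 2 ≠ D ∧ (pi ℓ b) ^ 2 = pi ℓ D} = ℓ := by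
  haveI : Fact ℓ.Prime := ⟨hℓ⟩
  have hiff : ∀ b : ZMod (ℓ ^ 2), (b ^ 2 ≠ D ∧ (pi ℓ b) ^ 2 = pi ℓ D) ↔ pi ℓ b = 0 := by
    intro b
    rw [h0]
    constructor
    · rintro ⟨h1, h2⟩
      exact (pow_eq_zero_iff two_ne_zero).1 h2
    · intro hb
      refine ⟨by rw [sq_zero hℓ hb]; exact Ne.symm hne, by rw [hb]; exact zero_pow two_ne_zero⟩
  exact (Nat.card_congr (Equiv.subtypeEquivRight hiff)).trans (card_fiber hℓ 0)

lemma caseD (hℓ : ℓ.Prime) (hℓodd : ℓ ≠ 2) (D : ZMod (ℓ ^ 2)) (hDu : IsUnit D)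
    (hns : ¬∃ u : (ZMod (ℓ ^ 2))ˣ, D = (u : ZMod (ℓ ^ 2)) ^ 2) :
    Nat.card {b : ZMod (ℓ ^ 2) // b ^ 2 ≠ D ∧ (pi ℓ b) ^ 2 = pi ℓ D} = 0 := by
  haveI : Fact ℓ.Prime := ⟨hℓ⟩
  have : IsEmpty {b : ZMod (ℓ ^ 2) // b ^ 2 ≠ D ∧ (pi ℓ b) ^ 2 = pi ℓ D} := by
    constructor
    rintro ⟨b, h1, h2⟩
    have hpD : pi ℓ D ≠ 0 := (hDu.map (pi ℓ)).ne_zero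
    have hpb : pi ℓ b ≠ 0 := fun h => hpD (by rw [← h2, h, zero_pow two_ne_zero])
    have hb : IsUnit b := isUnit_of_pi_ne hℓ hpb
    have hdvd : (ℓ : ZMod (ℓ ^ 2)) ∣ D - b ^ 2 := by
      rw [dvd_iff hℓ, map_sub, map_pow, ← h2, sub_self]
    obtain ⟨m, hm⟩ := hdvd
    have h2b : IsUnit (2 * b) := (two_isUnit hℓ hℓodd).mul hb
    set i := ((h2b.unit⁻¹ : (ZMod (ℓ ^ 2))ˣ) : ZMod (ℓ ^ 2)) with hi_def
    have hi : (2 * b) * i = 1 := h2b.mul_val_inv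
    set c := b + (ℓ : ZMod (ℓ ^ 2)) * (i * m) with hc_def
    have hll : (ℓ : ZMod (ℓ ^ 2)) * (ℓ : ZMod (ℓ ^ 2)) = 0 := lsq
    have hc : c ^ 2 = D := by
      rw [hc_def]
      linear_combination ((ℓ : ZMod (ℓ ^ 2)) * m) * hi + (i ^ 2 * m ^ 2) * hll - hm
    have hc2 : IsUnit (c ^ 2) := by rw [hc]; exact hDu
    have hcu : IsUnit c := (isUnit_pow_iff two_ne_zero).1 hc2
    exact hns ⟨hcu.unit, by rw [hcu.unit_spec]; exact hc.symm⟩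
  exact Nat.card_of_isEmpty

lemma caseC (hℓ : ℓ.Prime) (hℓodd : ℓ ≠ 2) (D : ZMod (ℓ ^ 2)) (u : (ZMod (ℓ ^ 2))ˣ)
    (hD : D = (u : ZMod (ℓ ^ 2)) ^ 2) :
    Nat.card {b : ZMod (ℓ ^ 2) // b ^ 2 ≠ D ∧ (pi ℓ b) ^ 2 = pi ℓ D} = 2 * (ℓ - 1) := by
  haveI : Fact ℓ.Prime := ⟨hℓ⟩
  subst hD
  have h2u : pi ℓ (2 * (u : ZMod (ℓ ^ 2))) ≠ 0 :=
    (((two_isUnit hℓ hℓodd).mul u.isUnit).map (pi ℓ)).ne_zero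
  have h2u' : pi ℓ (u : ZMod (ℓ ^ 2)) ≠ - pi ℓ (u : ZMod (ℓ ^ 2)) := by
    intro h
    apply h2u
    have : pi ℓ (2 * (u : ZMod (ℓ ^ 2))) = pi ℓ u + pi ℓ u := by
      rw [two_mul, map_add]
    rw [this]
    linear_combination h
  have hiff : ∀ b : ZMod (ℓ ^ 2),
      (b ^ 2 ≠ (u : ZMod (ℓ ^ 2)) ^ 2 ∧ (pi ℓ b) ^ 2 = pi ℓ ((u : ZMod (ℓ ^ 2)) ^ 2)) ↔
      ((pi ℓ b = pi ℓ (u : ZMod (ℓ ^ 2)) ∧ b ≠ (u : ZMod (ℓ ^ 2))) ∨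
       (pi ℓ b = pi ℓ (-(u : ZMod (ℓ ^ 2))) ∧ b ≠ -(u : ZMod (ℓ ^ 2)))) := by
    intro b
    rw [map_pow, map_neg]
    constructor
    · rintro ⟨h1, h2⟩
      have hfac : (pi ℓ b - pi ℓ u) * (pi ℓ b + pi ℓ u) = 0 := by linear_combination h2
      rcases mul_eq_zero.1 hfac with h0 | h0
      · exact Or.inl ⟨sub_eq_zero.1 h0, fun hb => h1 (by rw [hb])⟩
      · exact Or.inr ⟨eq_neg_of_add_eq_zero_left h0, fun hb => h1 (by rw [hb]; ring)⟩
    · rintro (⟨hp, hb⟩ | ⟨hp, hb⟩)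
      · refine ⟨?_, by rw [hp]⟩
        intro he
        rcases sq_eq_sq_units hℓ hℓodd u he with h | h
        · exact hb h
        · rw [h, map_neg] at hp
          exact h2u' hp.symm
      · refine ⟨?_, by rw [hp]; ring⟩
        intro he
        rcases sq_eq_sq_units hℓ hℓodd u he with h | h
        · rw [h] at hp
          exact h2u' hp
        · exact hb h
  have hdisj : Disjoint
      (fun b : ZMod (ℓ ^ 2) => pi ℓ b = pi ℓ (u : ZMod (ℓ ^ 2)) ∧ b ≠ (u : ZMod (ℓ ^ 2)))
      (fun b : ZMod (ℓ ^ 2) => pi ℓ b = pi ℓ (-(u : ZMod (ℓ ^ 2))) ∧ b ≠ -(u : ZMod (ℓ ^ 2))) := by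
    rw [Pi.disjoint_iff]
    intro b
    rw [Prop.disjoint_iff]
    rintro ⟨⟨ha, -⟩, ⟨hb, -⟩⟩
    rw [map_neg] at hb
    exact h2u' (ha.symm.trans hb)
  classical
  have hsum : Nat.card {b : ZMod (ℓ ^ 2) //
      (pi ℓ b = pi ℓ (u : ZMod (ℓ ^ 2)) ∧ b ≠ (u : ZMod (ℓ ^ 2))) ∨
      (pi ℓ b = pi ℓ (-(u : ZMod (ℓ ^ 2))) ∧ b ≠ -(u : ZMod (ℓ ^ 2)))} =
      Nat.card {b : ZMod (ℓ ^ 2) // pi ℓ b = pi ℓ (u : ZMod (ℓ ^ 2)) ∧ b ≠ (u : ZMod (ℓ ^ 2))} +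
      Nat.card {b : ZMod (ℓ ^ 2) // pi ℓ b = pi ℓ (-(u : ZMod (ℓ ^ 2))) ∧ b ≠ -(u : ZMod (ℓ ^ 2))} := by
    rw [Nat.card_eq_fintype_card, Nat.card_eq_fintype_card, Nat.card_eq_fintype_card]
    exact Fintype.card_subtype_or_disjoint _ _ hdisj
  rw [Nat.card_congr (Equiv.subtypeEquivRight hiff), hsum,
    card_fiber_ne hℓ (u : ZMod (ℓ ^ 2)), card_fiber_ne hℓ (-(u : ZMod (ℓ ^ 2)))]
  omega

lemma reduce (hℓ : ℓ.Prime) (hℓodd : ℓ ≠ 2) (d : (ZMod (ℓ ^ 2))ˣ) (t : ZMod (ℓ ^ 2)) :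
    Nat.card {a : ZMod (ℓ ^ 2) // a ^ 2 - a * t + (d : ZMod (ℓ ^ 2)) ≠ 0 ∧
        (ℓ : ZMod (ℓ ^ 2)) ∣ a ^ 2 - a * t + (d : ZMod (ℓ ^ 2))} =
    Nat.card {b : ZMod (ℓ ^ 2) // b ^ 2 ≠ t ^ 2 - 4 * (d : ZMod (ℓ ^ 2)) ∧
        (pi ℓ b) ^ 2 = pi ℓ (t ^ 2 - 4 * (d : ZMod (ℓ ^ 2)))} := by
  have h2 := two_isUnit hℓ hℓodd
  have h4 : IsUnit (4 : ZMod (ℓ ^ 2)) := by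
    have := h2.mul h2
    norm_num at this
    exact this
  set i2 := ((h2.unit⁻¹ : (ZMod (ℓ ^ 2))ˣ) : ZMod (ℓ ^ 2)) with hi2_def
  have h2i : (2 : ZMod (ℓ ^ 2)) * i2 = 1 := h2.mul_val_inv
  let e : ZMod (ℓ ^ 2) ≃ ZMod (ℓ ^ 2) :=
    { toFun := fun a => 2 * a - t
      invFun := fun b => i2 * (b + t)
      left_inv := fun a => by linear_combination a * h2i
      right_inv := fun b => by linear_combination (b + t) * h2i }
  refine Nat.card_congr (Equiv.subtypeEquiv e ?_)
  intro a
  have hkey : (2 * a - t) ^ 2 - (t ^ 2 - 4 * (d : ZMod (ℓ ^ 2)))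
      = 4 * (a ^ 2 - a * t + (d : ZMod (ℓ ^ 2))) := by ring
  have h1 : a ^ 2 - a * t + (d : ZMod (ℓ ^ 2)) ≠ 0 ↔
      (2 * a - t) ^ 2 ≠ t ^ 2 - 4 * (d : ZMod (ℓ ^ 2)) := by
    rw [ne_eq, ne_eq, ← sub_eq_zero (a := (2 * a - t) ^ 2), hkey, h4.mul_right_eq_zero]
  have h2' : (ℓ : ZMod (ℓ ^ 2)) ∣ a ^ 2 - a * t + (d : ZMod (ℓ ^ 2)) ↔
      (pi ℓ (2 * a - t)) ^ 2 = pi ℓ (t ^ 2 - 4 * (d : ZMod (ℓ ^ 2))) := by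
    rw [← h4.dvd_mul_left, ← hkey, dvd_iff hℓ, map_sub, map_pow, sub_eq_zero]
  exact and_congr h1 h2'

end Stmt9Aux


/-- For an odd prime ℓ, a unit d of ℤ/ℓ²ℤ and t ∈ ℤ/ℓ²ℤ, the number of a ∈ ℤ/ℓ²ℤ
with a² − at + d ≠ 0 but ℓ ∣ a² − at + d is: 0 if t² − 4d = 0; ℓ if t² − 4d ≠ 0
and ℓ ∣ t² − 4d; 2(ℓ−1) if t² − 4d is a quadratic residue; 0 if t² − 4d is a
quadratic non-residue. -/
theorem stmt_9 (ℓ : ℕ) (hℓ : ℓ.Prime) (hℓodd : ℓ ≠ 2)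
    (d : (ZMod (ℓ ^ 2))ˣ) (t : ZMod (ℓ ^ 2)) :
    (t ^ 2 - 4 * (d : ZMod (ℓ ^ 2)) = 0 →
      Nat.card {a : ZMod (ℓ ^ 2) // a ^ 2 - a * t + (d : ZMod (ℓ ^ 2)) ≠ 0 ∧
        (ℓ : ZMod (ℓ ^ 2)) ∣ a ^ 2 - a * t + (d : ZMod (ℓ ^ 2))} = 0) ∧
    ((t ^ 2 - 4 * (d : ZMod (ℓ ^ 2)) ≠ 0 ∧
        (ℓ : ZMod (ℓ ^ 2)) ∣ t ^ 2 - 4 * (d : ZMod (ℓ ^ 2))) →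
      Nat.card {a : ZMod (ℓ ^ 2) // a ^ 2 - a * t + (d : ZMod (ℓ ^ 2)) ≠ 0 ∧
        (ℓ : ZMod (ℓ ^ 2)) ∣ a ^ 2 - a * t + (d : ZMod (ℓ ^ 2))} = ℓ) ∧
    ((∃ u : (ZMod (ℓ ^ 2))ˣ, t ^ 2 - 4 * (d : ZMod (ℓ ^ 2)) = (u : ZMod (ℓ ^ 2)) ^ 2) →
      Nat.card {a : ZMod (ℓ ^ 2) // a ^ 2 - a * t + (d : ZMod (ℓ ^ 2)) ≠ 0 ∧
        (ℓ : ZMod (ℓ ^ 2)) ∣ a ^ 2 - a * t + (d : ZMod (ℓ ^ 2))} = 2 * (ℓ - 1)) ∧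
    ((IsUnit (t ^ 2 - 4 * (d : ZMod (ℓ ^ 2))) ∧
        ¬∃ u : (ZMod (ℓ ^ 2))ˣ, t ^ 2 - 4 * (d : ZMod (ℓ ^ 2)) = (u : ZMod (ℓ ^ 2)) ^ 2) →
      Nat.card {a : ZMod (ℓ ^ 2) // a ^ 2 - a * t + (d : ZMod (ℓ ^ 2)) ≠ 0 ∧
        (ℓ : ZMod (ℓ ^ 2)) ∣ a ^ 2 - a * t + (d : ZMod (ℓ ^ 2))} = 0) := by
  have hred := Stmt9Aux.reduce hℓ hℓodd d t
  refine ⟨?_, ?_, ?_, ?_⟩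
  · intro h0
    rw [hred]
    exact Stmt9Aux.caseA hℓ _ h0
  · rintro ⟨hne, hdvd⟩
    rw [hred]
    exact Stmt9Aux.caseB hℓ _ hne ((Stmt9Aux.dvd_iff hℓ _).1 hdvd)
  · rintro ⟨u, hu⟩
    rw [hred]
    exact Stmt9Aux.caseC hℓ hℓodd _ u hu
  · rintro ⟨hunit, hns⟩
    rw [hred]
    exact Stmt9Aux.caseD hℓ hℓodd _ hunit hns
end

section
/- Let ℓ be an odd prime, d a unit of ℤ/ℓ²ℤ, and t ∈ ℤ/ℓ²ℤ. Then the number of nonzero elements a ∈ ℤ/ℓ²ℤ such that a² − at + d is a unit of ℤ/ℓ²ℤ equals: ℓ² − ℓ − 1 if t² − 4d = 0; ℓ² − ℓ − 1 if t² − 4d ≠ 0 and ℓ divides t² − 4d; ℓ² − 2ℓ − 1 if t² − 4d is a quadratic residue; and ℓ² − 1 if t² − 4d is a quadratic non-residue. -/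
/-!
An element of `ℤ/ℓ²ℤ` is a unit exactly when its reduction mod `ℓ` is nonzero, and every fibre
of the reduction has `ℓ` elements. So `a ↦ a² − at + d` fails to be a unit precisely on the `ℓ`
lifts of each root of the reduced quadratic (these roots are nonzero because `d` is a unit), and
completing the square in `ℤ/ℓℤ` shows that the reduced quadratic has as many roots as its
discriminant `t² − 4d` has square roots mod `ℓ`: one if `ℓ ∣ t² − 4d`, two if `t² − 4d` is a
square unit, and none otherwise, since a nonzero square root mod `ℓ` lifts to `ℤ/ℓ²ℤ`.
-/

open Finset

theorem exists_sq_eq_of_isUnit_two_mul {R : Type*} [CommRing R] {s D : R}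
    (hs : IsUnit (2 * s)) (h : (s ^ 2 - D) ^ 2 = 0) : ∃ r, r ^ 2 = D := by
  obtain ⟨v, hv⟩ := hs.exists_right_inv
  -- one Newton step `s - (s² - D) / (2s)`; it is exact because `(s² - D)² = 0`
  exact ⟨s - (s ^ 2 - D) * v, by linear_combination (D - s ^ 2) * hv + v ^ 2 * h⟩

theorem card_preimage_mul_card_of_surjective {G M F : Type*} [AddGroup G] [Fintype G]
    [AddGroup M] [Fintype M] [DecidableEq M] [FunLike F G M] [AddMonoidHomClass F G M] (f : F)
    (hf : Function.Surjective f) (S : Finset M) :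
    #{g | f g ∈ S} * Fintype.card M = #S * Fintype.card G := by
  have hpreimage (S : Finset M) : #{g | f g ∈ S} = #S * #{g | f g = 0} := by
    rw [← sum_card_fiberwise_eq_card_filter]
    exact sum_const_nat fun y _ => AddMonoidHom.card_fiber_eq_of_mem_range f (hf y) (hf 0)
  have hG : Fintype.card G = Fintype.card M * #{g | f g = 0} := by simpa using hpreimage univ
  rw [hpreimage, hG]
  ring

section QuadraticCount

variable {K : Type*} [Field K] [Fintype K] [DecidableEq K]

theorem card_quadratic_roots_eq_card_sqrt (hK : ringChar K ≠ 2) (t d : K) :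
    #{x : K | x ^ 2 - x * t + d = 0} = #{y : K | y ^ 2 = t ^ 2 - 4 * d} := by
  have h2 : (2 : K) ≠ 0 := Ring.two_ne_zero hK
  refine card_equiv ((Equiv.mulLeft₀ 2 h2).trans (Equiv.subRight t)) fun x => ?_
  have key : (2 * x - t) ^ 2 - (t ^ 2 - 4 * d) = 2 ^ 2 * (x ^ 2 - x * t + d) := by ring
  simp only [mem_filter, mem_univ, true_and]
  show _ ↔ (2 * x - t) ^ 2 = _
  rw [← sub_eq_zero (a := (2 * x - t) ^ 2), key, mul_eq_zero, or_iff_right (pow_ne_zero 2 h2)]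

theorem card_sq_eq_zero : #{y : K | y ^ 2 = 0} = 1 := by
  simp [pow_eq_zero_iff, filter_eq']

theorem card_sq_eq_sq (hK : ringChar K ≠ 2) {s : K} (hs : s ≠ 0) :
    #{y : K | y ^ 2 = s ^ 2} = 2 := by
  have : ({y | y ^ 2 = s ^ 2} : Finset K) = {s, -s} := by
    ext y
    simp [sq_eq_sq_iff_eq_or_eq_neg]
  rw [this, card_pair]
  exact fun h => hs ((Ring.eq_self_iff_eq_zero_of_char_ne_two hK).mp h.symm)

end QuadraticCount

namespace ZMod

variable {ℓ : ℕ} [Fact ℓ.Prime]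

local notation "π" => ZMod.castHom (dvd_pow_self ℓ two_ne_zero) (ZMod ℓ)

theorem castHom_eq_zero_iff_dvd_val (x : ZMod (ℓ ^ 2)) : π x = 0 ↔ ℓ ∣ x.val := by
  rw [castHom_apply, ← natCast_val, natCast_eq_zero_iff]

theorem isUnit_iff_castHom_ne_zero (x : ZMod (ℓ ^ 2)) : IsUnit x ↔ π x ≠ 0 := by
  rw [Ne, castHom_eq_zero_iff_dvd_val, ← isUnit_natCast_iff_not_dvd_pow Fact.out two_pos,
    natCast_zmod_val]

theorem sq_eq_zero_of_castHom_eq_zero {x : ZMod (ℓ ^ 2)} (hx : π x = 0) : x ^ 2 = 0 := by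
  rw [← natCast_zmod_val x, ← Nat.cast_pow, natCast_eq_zero_iff]
  exact pow_dvd_pow_of_dvd ((castHom_eq_zero_iff_dvd_val x).mp hx) 2

theorem card_castHom_preimage (S : Finset (ZMod ℓ)) :
    #{a : ZMod (ℓ ^ 2) | π a ∈ S} = ℓ * #S := by
  have := card_preimage_mul_card_of_surjective π
    (castHom_surjective (dvd_pow_self ℓ two_ne_zero)) S
  rw [card, card] at this
  exact Nat.eq_of_mul_eq_mul_right (Fact.out : ℓ.Prime).pos (by rw [this]; ring)

theorem card_nonzero_isUnit_quadratic (d : (ZMod (ℓ ^ 2))ˣ) (t : ZMod (ℓ ^ 2)) :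
    Nat.card {a : ZMod (ℓ ^ 2) // a ≠ 0 ∧ IsUnit (a ^ 2 - a * t + (d : ZMod (ℓ ^ 2)))}
      = ℓ ^ 2 - 1 - ℓ * #{x : ZMod ℓ | x ^ 2 - x * π t + π d = 0} := by
  set R : Finset (ZMod ℓ) := {x | x ^ 2 - x * π t + π d = 0}
  have hzero : (0 : ZMod (ℓ ^ 2)) ∈ ({a | π a ∈ R} : Finset _)ᶜ := by
    simpa only [mem_compl, mem_filter, mem_univ, true_and, R, map_zero, ne_eq, two_ne_zero,
      not_false_eq_true, zero_pow, zero_mul, sub_zero, zero_add]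
      using (isUnit_iff_castHom_ne_zero _).mp d.isUnit
  have hmem (a : ZMod (ℓ ^ 2)) : a ≠ 0 ∧ IsUnit (a ^ 2 - a * t + (d : ZMod (ℓ ^ 2)))
      ↔ a ∈ ({a | π a ∈ R} : Finset (ZMod (ℓ ^ 2)))ᶜ.erase 0 := by
    simp only [mem_filter, mem_univ, true_and, mem_erase, mem_compl, R,
      isUnit_iff_castHom_ne_zero, map_add, map_sub, map_mul, map_pow]
  rw [Nat.card_congr (Equiv.subtypeEquivRight hmem), Nat.card_eq_finsetCard,
    card_erase_of_mem hzero, card_compl, card_castHom_preimage, card, Nat.sub_right_comm]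

theorem card_nonzero_isUnit_quadratic_of_ne_two (hℓ : ℓ ≠ 2) (d : (ZMod (ℓ ^ 2))ˣ)
    (t : ZMod (ℓ ^ 2)) :
    Nat.card {a : ZMod (ℓ ^ 2) // a ≠ 0 ∧ IsUnit (a ^ 2 - a * t + (d : ZMod (ℓ ^ 2)))}
      = ℓ ^ 2 - 1 - ℓ * #{y : ZMod ℓ | y ^ 2 = π (t ^ 2 - 4 * (d : ZMod (ℓ ^ 2)))} := by
  rw [card_nonzero_isUnit_quadratic,
    card_quadratic_roots_eq_card_sqrt (by rwa [ringChar_zmod_n]), map_sub, map_pow, map_mul,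
    map_ofNat]

theorem exists_unit_sq_eq_of_sq_eq_castHom (hℓ : ℓ ≠ 2) {D : ZMod (ℓ ^ 2)} {y : ZMod ℓ}
    (hy : y ≠ 0) (h : y ^ 2 = π D) : ∃ u : (ZMod (ℓ ^ 2))ˣ, D = (u : ZMod (ℓ ^ 2)) ^ 2 := by
  obtain ⟨s, rfl⟩ := castHom_surjective (dvd_pow_self ℓ two_ne_zero) y
  have h2s : IsUnit (2 * s) := by
    rw [isUnit_iff_castHom_ne_zero, map_mul, map_ofNat]
    exact mul_ne_zero (Ring.two_ne_zero (by rwa [ringChar_zmod_n])) hy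
  obtain ⟨r, hr⟩ := exists_sq_eq_of_isUnit_two_mul (D := D) h2s
    (sq_eq_zero_of_castHom_eq_zero (by rw [map_sub, map_pow, h, sub_self]))
  have hD : IsUnit D := by
    rw [isUnit_iff_castHom_ne_zero, ← h]
    exact pow_ne_zero 2 hy
  obtain ⟨u, hu⟩ := (isUnit_pow_iff two_ne_zero).mp (hr ▸ hD : IsUnit (r ^ 2))
  exact ⟨u, by rw [hu, hr]⟩

end ZMod

/-- For an odd prime ℓ, a unit d of ℤ/ℓ²ℤ and t ∈ ℤ/ℓ²ℤ, the number of nonzero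
a ∈ ℤ/ℓ²ℤ with a² − at + d a unit is: ℓ² − ℓ − 1 if t² − 4d = 0; ℓ² − ℓ − 1 if
t² − 4d ≠ 0 and ℓ ∣ t² − 4d; ℓ² − 2ℓ − 1 if t² − 4d is a quadratic residue;
ℓ² − 1 if t² − 4d is a quadratic non-residue. -/
theorem stmt_10 (ℓ : ℕ) (hℓ : ℓ.Prime) (hℓodd : ℓ ≠ 2)
    (d : (ZMod (ℓ ^ 2))ˣ) (t : ZMod (ℓ ^ 2)) :
    (t ^ 2 - 4 * (d : ZMod (ℓ ^ 2)) = 0 →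
      Nat.card {a : ZMod (ℓ ^ 2) // a ≠ 0 ∧
        IsUnit (a ^ 2 - a * t + (d : ZMod (ℓ ^ 2)))} = ℓ ^ 2 - ℓ - 1) ∧
    ((t ^ 2 - 4 * (d : ZMod (ℓ ^ 2)) ≠ 0 ∧
        (ℓ : ZMod (ℓ ^ 2)) ∣ t ^ 2 - 4 * (d : ZMod (ℓ ^ 2))) →
      Nat.card {a : ZMod (ℓ ^ 2) // a ≠ 0 ∧
        IsUnit (a ^ 2 - a * t + (d : ZMod (ℓ ^ 2)))} = ℓ ^ 2 - ℓ - 1) ∧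
    ((∃ u : (ZMod (ℓ ^ 2))ˣ, t ^ 2 - 4 * (d : ZMod (ℓ ^ 2)) = (u : ZMod (ℓ ^ 2)) ^ 2) →
      Nat.card {a : ZMod (ℓ ^ 2) // a ≠ 0 ∧
        IsUnit (a ^ 2 - a * t + (d : ZMod (ℓ ^ 2)))} = ℓ ^ 2 - 2 * ℓ - 1) ∧
    ((IsUnit (t ^ 2 - 4 * (d : ZMod (ℓ ^ 2))) ∧
        ¬∃ u : (ZMod (ℓ ^ 2))ˣ, t ^ 2 - 4 * (d : ZMod (ℓ ^ 2)) = (u : ZMod (ℓ ^ 2)) ^ 2) →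
      Nat.card {a : ZMod (ℓ ^ 2) // a ≠ 0 ∧
        IsUnit (a ^ 2 - a * t + (d : ZMod (ℓ ^ 2)))} = ℓ ^ 2 - 1) := by
  have : Fact ℓ.Prime := ⟨hℓ⟩
  rw [ZMod.card_nonzero_isUnit_quadratic_of_ne_two hℓodd]
  refine ⟨fun h0 => ?_, fun ⟨_, c, hc⟩ => ?_, fun ⟨u, hu⟩ => ?_, fun ⟨hD, hnsq⟩ => ?_⟩
  · rw [h0, map_zero, card_sq_eq_zero, mul_one, Nat.sub_right_comm]
  · rw [hc, map_mul, map_natCast, ZMod.natCast_self, zero_mul, card_sq_eq_zero, mul_one,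
      Nat.sub_right_comm]
  · have hu0 := (ZMod.isUnit_iff_castHom_ne_zero _).mp u.isUnit
    rw [hu, map_pow, card_sq_eq_sq (by rwa [ZMod.ringChar_zmod_n]) hu0, mul_comm,
      Nat.sub_right_comm]
  · suffices hnone : #{y : ZMod ℓ | y ^ 2 = ZMod.castHom (dvd_pow_self ℓ two_ne_zero) (ZMod ℓ)
        (t ^ 2 - 4 * (d : ZMod (ℓ ^ 2)))} = 0 by rw [hnone, mul_zero, Nat.sub_zero]
    refine card_eq_zero.mpr (filter_eq_empty_iff.mpr fun y _ hy => hnsq ?_)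
    refine ZMod.exists_unit_sq_eq_of_sq_eq_castHom hℓodd (fun hy0 => ?_) hy
    exact (ZMod.isUnit_iff_castHom_ne_zero _).mp hD (by rw [← hy, hy0, zero_pow two_ne_zero])
end

section
/- Let ℓ be an odd prime and k₁, k₂ ≥ 2 and n ≥ 1 integers. Then the componentwise reduction map modulo ℓ sends Λ_n onto Λ₁, and the number of pairs (d₁, d₂) ∈ Λ_n with d₁ ≡ 1 (mod ℓ) and d₂ ≡ 1 (mod ℓ) equals ℓ^{n−1}·λ₁/λ_n. -/
/-!
For odd `ℓ` the group `G = (ℤ/ℓⁿℤ)ˣ` is cyclic, and `Λₙ` is the image of `ψ : v ↦ (v^a, v^b)`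
(`a = k₁ - 1`, `b = k₂ - 1`), whose kernel is that of `v ↦ v^gcd(a,b)` and so has order
`gcd(|G|, a, b) = λₙ`. The pairs of `Λₙ` that are `≡ 1 (mod ℓ)` are the image under `ψ` of
`K = {v | ψ(v mod ℓ) = 1}`, which contains `ker ψ`. Reduction `G → (ℤ/ℓℤ)ˣ` is onto with kernel
of order `ℓ^(n-1)`, so `|K| = ℓ^(n-1)·λ₁`, and the count is `|K| / λₙ`.
-/

open Function Subgroup

namespace Subgroup

variable {G G' : Type*} [Group G] [Group G']

theorem card_map_mul_card_ker {f : G →* G'} {K : Subgroup G} (h : f.ker ≤ K) :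
    Nat.card (K.map f) * Nat.card f.ker = Nat.card K := by
  rw [← relIndex_ker, ← relIndex_bot_left, ← relIndex_bot_left K, mul_comm]
  exact relIndex_mul_relIndex _ _ _ bot_le h

theorem card_comap_of_surjective {f : G →* G'} (hf : Surjective f) (H : Subgroup G') :
    Nat.card (H.comap f) = Nat.card H * Nat.card f.ker := by
  rw [← card_map_mul_card_ker (f.ker_le_comap H), map_comap_eq_self_of_surjective hf]

end Subgroup

section powPair

variable {G H : Type*} [CommGroup G] [CommGroup H]

def powPair (a b : ℕ) : G →* G × G := (powMonoidHom a).prod (powMonoidHom b)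

@[simp]
theorem powPair_apply (a b : ℕ) (v : G) : powPair a b v = (v ^ a, v ^ b) := rfl

theorem ker_powPair (a b : ℕ) :
    (powPair a b : G →* G × G).ker = (powMonoidHom (a.gcd b) : G →* G).ker := by
  ext v
  simp only [MonoidHom.mem_ker, powPair_apply, Prod.mk_eq_one, powMonoidHom_apply,
    ← orderOf_dvd_iff_pow_eq_one, Nat.dvd_gcd_iff]

theorem prodMap_comp_powPair (f : G →* H) (a b : ℕ) :
    (f.prodMap f).comp (powPair a b) = (powPair a b).comp f := by
  ext v <;> simp

theorem card_range_powPair_inf_ker_mul [Finite G] [IsCyclic G] [Finite H] [IsCyclic H]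
    {f : G →* H} (hf : Surjective f) (a b : ℕ) :
    Nat.card ((powPair a b).range ⊓ (f.prodMap f).ker : Subgroup (G × G)) *
        (Nat.card G).gcd (a.gcd b) =
      (Nat.card H).gcd (a.gcd b) * Nat.card f.ker := by
  have hK : (f.prodMap f).ker.comap (powPair a b) = (powPair a b : H →* H × H).ker.comap f := by
    rw [MonoidHom.comap_ker, MonoidHom.comap_ker, prodMap_comp_powPair]
  calc
    _ = Nat.card (((f.prodMap f).ker.comap (powPair a b)).map (powPair a b)) *
        Nat.card (powPair a b : G →* G × G).ker := by
      rw [map_comap_eq, ker_powPair, IsCyclic.card_powMonoidHom_ker]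
    _ = Nat.card ((powPair a b : H →* H × H).ker.comap f) :=
      hK ▸ card_map_mul_card_ker (MonoidHom.ker_le_comap _ _)
    _ = _ := by rw [card_comap_of_surjective hf, ker_powPair, IsCyclic.card_powMonoidHom_ker]

end powPair

theorem card_unit_pow_pairs_map_eq_one {R S F : Type*} [CommMonoid R] [CommMonoid S] [FunLike F R S]
    [MonoidHomClass F R S] (f : F) (a b : ℕ) :
    Nat.card {p : R × R // (∃ v : Rˣ, p = ((v : R) ^ a, (v : R) ^ b)) ∧ f p.1 = 1 ∧ f p.2 = 1} =
      Nat.card ((powPair a b).range ⊓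
        ((Units.map (f : R →* S)).prodMap (Units.map (f : R →* S))).ker : Subgroup (Rˣ × Rˣ)) := by
  have hι : Injective (Prod.map ((↑) : Rˣ → R) ((↑) : Rˣ → R)) :=
    Units.val_injective.prodMap Units.val_injective
  refine (Nat.card_congr (Equiv.subtypeEquivRight fun p => ?_)).trans
    (Nat.card_image_of_injective hι _)
  constructor
  · rintro ⟨⟨v, rfl⟩, h₁, h₂⟩
    refine ⟨(v ^ a, v ^ b), ⟨⟨v, rfl⟩, ?_⟩, rfl⟩
    simp_all [Prod.ext_iff, Units.ext_iff]
  · rintro ⟨_, ⟨⟨v, rfl⟩, hv⟩, rfl⟩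
    refine ⟨⟨v, rfl⟩, ?_⟩
    simp_all [Prod.ext_iff, Units.ext_iff]

theorem ZMod.card_ker_unitsMap_prime_pow {p : ℕ} [Fact p.Prime] {n : ℕ} (hn : n ≠ 0) :
    Nat.card (ZMod.unitsMap (dvd_pow_self p hn)).ker = p ^ (n - 1) := by
  have h := card_comap_of_surjective (ZMod.unitsMap_surjective (dvd_pow_self p hn)) ⊤
  rw [comap_top, card_top, card_top, Nat.card_eq_fintype_card,
    Nat.card_eq_fintype_card (α := (ZMod p)ˣ), ZMod.card_units_eq_totient, ZMod.card_units,
    Nat.totient_prime_pow Fact.out (Nat.pos_of_ne_zero hn), mul_comm] at h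
  exact (Nat.eq_of_mul_eq_mul_left (Nat.sub_pos_of_lt (Fact.out : p.Prime).one_lt) h).symm

theorem stmt_13_general (ℓ : ℕ) (hℓ : ℓ.Prime) (hℓodd : ℓ ≠ 2)
    (k₁ k₂ n : ℕ) (hn : 1 ≤ n) :
    (∀ q : ZMod ℓ × ZMod ℓ,
      (∃ w : (ZMod ℓ)ˣ, q = ((w : ZMod ℓ) ^ (k₁ - 1), (w : ZMod ℓ) ^ (k₂ - 1))) →
      ∃ v : (ZMod (ℓ ^ n))ˣ,
        (ZMod.castHom (dvd_pow_self ℓ (Nat.one_le_iff_ne_zero.mp hn)) (ZMod ℓ)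
            ((v : ZMod (ℓ ^ n)) ^ (k₁ - 1)),
          ZMod.castHom (dvd_pow_self ℓ (Nat.one_le_iff_ne_zero.mp hn)) (ZMod ℓ)
            ((v : ZMod (ℓ ^ n)) ^ (k₂ - 1))) = q) ∧
    Nat.card {p : ZMod (ℓ ^ n) × ZMod (ℓ ^ n) //
        (∃ v : (ZMod (ℓ ^ n))ˣ,
          p = ((v : ZMod (ℓ ^ n)) ^ (k₁ - 1), (v : ZMod (ℓ ^ n)) ^ (k₂ - 1))) ∧
        ZMod.castHom (dvd_pow_self ℓ (Nat.one_le_iff_ne_zero.mp hn)) (ZMod ℓ) p.1 = 1 ∧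
        ZMod.castHom (dvd_pow_self ℓ (Nat.one_le_iff_ne_zero.mp hn)) (ZMod ℓ) p.2 = 1} =
      ℓ ^ (n - 1) * Nat.gcd (ℓ - 1) (Nat.gcd (k₁ - 1) (k₂ - 1)) /
        Nat.gcd (ℓ ^ n - ℓ ^ (n - 1)) (Nat.gcd (k₁ - 1) (k₂ - 1)) := by
  have := Fact.mk hℓ
  have := ZMod.isCyclic_units_of_prime_pow ℓ hℓ hℓodd n
  have hn₀ := Nat.one_le_iff_ne_zero.mp hn
  have hr := ZMod.unitsMap_surjective (m := ℓ ^ n) (dvd_pow_self ℓ hn₀)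
  refine ⟨?_, ?_⟩
  · rintro q ⟨w, rfl⟩
    obtain ⟨v, rfl⟩ := hr w
    exact ⟨v, by rw [map_pow, map_pow]; rfl⟩
  · have hcard : Nat.card (ZMod (ℓ ^ n))ˣ = ℓ ^ n - ℓ ^ (n - 1) := by
      rw [Nat.card_eq_fintype_card, ZMod.card_units_eq_totient,
        Nat.totient_prime_pow hℓ (Nat.pos_of_ne_zero hn₀), Nat.mul_sub_one, pow_sub_one_mul hn₀]
    rw [card_unit_pow_pairs_map_eq_one (ZMod.castHom (dvd_pow_self ℓ hn₀) (ZMod ℓ)), ← hcard,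
      eq_comm]
    refine Nat.div_eq_of_eq_mul_left (Nat.gcd_pos_of_pos_left _ Nat.card_pos) ?_
    rw [← ZMod.unitsMap_def, card_range_powPair_inf_ker_mul hr,
      ZMod.card_ker_unitsMap_prime_pow hn₀, Nat.card_eq_fintype_card (α := (ZMod ℓ)ˣ),
      ZMod.card_units, mul_comm]

/-- For an odd prime ℓ and integers k₁, k₂ ≥ 2, n ≥ 1: componentwise reduction
mod ℓ maps Λₙ onto Λ₁, and the number of pairs (d₁, d₂) ∈ Λₙ with
d₁ ≡ 1 ≡ d₂ (mod ℓ) equals ℓ^(n−1)·λ₁/λₙ, where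
λⱼ = gcd(ℓʲ − ℓ^(j−1), k₁ − 1, k₂ − 1) and
Λⱼ = {(v^(k₁−1), v^(k₂−1)) : v a unit of ℤ/ℓʲℤ}. -/
theorem stmt_13 (ℓ : ℕ) (hℓ : ℓ.Prime) (hℓodd : ℓ ≠ 2)
    (k₁ k₂ n : ℕ) (hk₁ : 2 ≤ k₁) (hk₂ : 2 ≤ k₂) (hn : 1 ≤ n) :
    (∀ q : ZMod ℓ × ZMod ℓ,
      (∃ w : (ZMod ℓ)ˣ, q = ((w : ZMod ℓ) ^ (k₁ - 1), (w : ZMod ℓ) ^ (k₂ - 1))) →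
      ∃ v : (ZMod (ℓ ^ n))ˣ,
        (ZMod.castHom (dvd_pow_self ℓ (Nat.one_le_iff_ne_zero.mp hn)) (ZMod ℓ)
            ((v : ZMod (ℓ ^ n)) ^ (k₁ - 1)),
          ZMod.castHom (dvd_pow_self ℓ (Nat.one_le_iff_ne_zero.mp hn)) (ZMod ℓ)
            ((v : ZMod (ℓ ^ n)) ^ (k₂ - 1))) = q) ∧
    Nat.card {p : ZMod (ℓ ^ n) × ZMod (ℓ ^ n) //
        (∃ v : (ZMod (ℓ ^ n))ˣ,
          p = ((v : ZMod (ℓ ^ n)) ^ (k₁ - 1), (v : ZMod (ℓ ^ n)) ^ (k₂ - 1))) ∧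
        ZMod.castHom (dvd_pow_self ℓ (Nat.one_le_iff_ne_zero.mp hn)) (ZMod ℓ) p.1 = 1 ∧
        ZMod.castHom (dvd_pow_self ℓ (Nat.one_le_iff_ne_zero.mp hn)) (ZMod ℓ) p.2 = 1} =
      ℓ ^ (n - 1) * Nat.gcd (ℓ - 1) (Nat.gcd (k₁ - 1) (k₂ - 1)) /
        Nat.gcd (ℓ ^ n - ℓ ^ (n - 1)) (Nat.gcd (k₁ - 1) (k₂ - 1)) :=
  stmt_13_general ℓ hℓ hℓodd k₁ k₂ n hn
end

section
/- Fix integers k₁, k₂ ≥ 2 and set δ(ℓ²) = |𝒞_{ℓ²}|/|𝒜_{ℓ²}|. Then δ(ℓ²) is asymptotic to 1/ℓ² as ℓ ranges over primes: for every ε > 0 there exists L such that for every prime ℓ > L, |ℓ²·δ(ℓ²) − 1| < ε. -/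
/-!
Write `N(t, d)` for the number of `2 × 2` matrices over `R = ℤ/ℓ²ℤ` with trace `t` and
determinant `d`, and `D` for the set of admissible determinant pairs `(v^(k₁-1), v^(k₂-1))`.
Then `|𝒜| = ∑_{(d₁,d₂) ∈ D} (∑_t N(t,d₁)) (∑_t N(t,d₂))` and
`|𝒞| = ∑_{(d₁,d₂) ∈ D} ∑_t N(t,d₁) N(t,d₂)`, so `ℓ² δ(ℓ²) → 1` as soon as
`N(t, d) = ℓ⁴ (1 + O(1/ℓ))` uniformly in `t` and `d`.

Fixing the top-left entry `a` gives `N(t, d) = ∑_a #{(b, c) | b c = a (t - a) - d}`. If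
`a (t - a) - d` is a unit, the inner count is the number of units `ℓ² - ℓ`. Otherwise `a`
reduces to one of the at most two roots of `X² - t X + d` in the residue field, which leaves at
most `2ℓ` values of `a`, and for each of them the inner count is at most `3ℓ²` because in any
solution one factor is a unit or both lie in the maximal ideal.
-/

open Finset

theorem card_filter_isUnit (M : Type*) [Monoid M] [Fintype M] [DecidableEq M] :
    #{x : M | IsUnit x} = Fintype.card Mˣ := by
  rw [← Fintype.card_subtype]
  exact Fintype.card_congr (Equiv.ofBijective (fun u => ⟨u, u.isUnit⟩)
    ⟨fun u v h => Units.ext (congrArg Subtype.val h),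
      fun x => ⟨x.2.unit, Subtype.ext x.2.unit_spec⟩⟩).symm

theorem Nat.card_units_prod_subtype {M : Type*} [Monoid M] [Fintype M] [DecidableEq M]
    (Q : M → M → Prop) [DecidableRel Q] (hQ : ∀ a b, Q a b → IsUnit a ∧ IsUnit b) :
    Nat.card {P : Mˣ × Mˣ // Q P.1 P.2} = #{P : M × M | Q P.1 P.2} := by
  rw [← Fintype.card_subtype, Nat.card_eq_fintype_card]
  refine Fintype.card_congr (Equiv.ofBijective (fun P => ⟨(P.1.1, P.1.2), P.2⟩) ⟨?_, ?_⟩)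
  · rintro ⟨⟨a, b⟩, _⟩ ⟨⟨a', b'⟩, _⟩ h
    simp only [Subtype.mk.injEq, Prod.mk.injEq] at h
    simp [Units.ext h.1, Units.ext h.2]
  · rintro ⟨⟨a, b⟩, h⟩
    exact ⟨⟨((hQ a b h).1.unit, (hQ a b h).2.unit), h⟩, rfl⟩

theorem card_filter_fst_and_snd {X Y : Type*} [Fintype X] [Fintype Y] (p : X → Prop)
    (q : Y → Prop) [DecidablePred p] [DecidablePred q] :
    #{z : X × Y | p z.1 ∧ q z.2} = #{x | p x} * #{y | q y} := by
  rw [← card_product, ← filter_product, univ_product_univ]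

theorem card_filter_eq_and_and {X β : Type*} [Fintype X] [Fintype β] [DecidableEq β]
    (f : X → β) (p q : X → Prop) [DecidablePred p] [DecidablePred q] :
    #{z : X × X | f z.1 = f z.2 ∧ p z.1 ∧ q z.2} =
      ∑ b, #{x | f x = b ∧ p x} * #{x | f x = b ∧ q x} := by
  rw [card_eq_sum_card_fiberwise (f := fun z => f z.1) (t := univ)
    fun _ _ => mem_coe.2 (mem_univ _)]
  refine sum_congr rfl fun b _ => ?_
  rw [filter_filter, ← card_filter_fst_and_snd]
  exact congrArg card (filter_congr fun z _ => by grind)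

theorem card_mul_mul_sum_mul_le {ι : Type*} [Fintype ι] {x y : ι → ℕ} {m M : ℕ}
    (hm : ∀ i, m ≤ x i) (hM : ∀ i, x i ≤ M) :
    Fintype.card ι * m * ∑ i, x i * y i ≤ M * ((∑ i, x i) * ∑ i, y i) :=
  calc Fintype.card ι * m * ∑ i, x i * y i ≤ (∑ i, x i) * ∑ i, M * y i := by
        gcongr
        · simpa using card_nsmul_le_sum univ x m fun i _ => hm i
        · exact hM _
    _ = M * ((∑ i, x i) * ∑ i, y i) := by rw [← mul_sum]; ring

theorem mul_sum_mul_sum_le {ι : Type*} [Fintype ι] {x y : ι → ℕ} {m M : ℕ}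
    (hm : ∀ i, m ≤ x i) (hM : ∀ i, x i ≤ M) :
    m * ((∑ i, x i) * ∑ i, y i) ≤ Fintype.card ι * M * ∑ i, x i * y i :=
  calc m * ((∑ i, x i) * ∑ i, y i) = (∑ i, x i) * ∑ i, m * y i := by rw [← mul_sum]; ring
    _ ≤ Fintype.card ι * M * ∑ i, x i * y i := by
        gcongr
        · simpa using sum_le_card_nsmul univ x M fun i _ => hM i
        · exact hm _

theorem abs_sub_one_le_div_sub_one {K : Type*} [Field K] [LinearOrder K] [IsStrictOrderedRing K]
    {x m M : K} (hm : 0 < m) (hM : 0 < M) (h₁ : m / M ≤ x) (h₂ : x ≤ M / m) :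
    |x - 1| ≤ M / m - 1 := by
  have amgm : 2 ≤ m / M + M / m := by
    rw [div_add_div _ _ hM.ne' hm.ne', le_div_iff₀ (by positivity)]
    nlinarith [sq_nonneg (m - M)]
  rw [abs_sub_le_iff]
  constructor <;> linarith

section CommRing

variable {R : Type*} [CommRing R] [Fintype R] [DecidableEq R]

theorem card_mul_eq_of_isUnit {m : R} (hm : IsUnit m) :
    #{x : R × R | x.1 * x.2 = m} = #{a : R | IsUnit a} := by
  refine card_bij' (fun x _ => x.1) (fun a _ => (a, Ring.inverse a * m)) ?_ ?_ ?_ ?_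
  · simp only [mem_filter, mem_univ, true_and]
    rintro x rfl
    exact isUnit_of_mul_isUnit_left hm
  · simp only [mem_filter, mem_univ, true_and]
    exact fun a ha => Ring.mul_inverse_cancel_left a m ha
  · simp only [mem_filter, mem_univ, true_and]
    rintro x rfl
    simp [Ring.inverse_mul_cancel_left _ _ (isUnit_of_mul_isUnit_left hm)]
  · simp

theorem card_mul_eq_le (m : R) :
    #{x : R × R | x.1 * x.2 = m} ≤ 2 * Fintype.card R + #{a : R | ¬IsUnit a} ^ 2 := by
  set N : Finset R := {a | ¬IsUnit a}
  set U₁ : Finset (R × R) := {x | x.1 * x.2 = m ∧ IsUnit x.1}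
  set U₂ : Finset (R × R) := {x | x.1 * x.2 = m ∧ IsUnit x.2}
  have hsub : ({x : R × R | x.1 * x.2 = m} : Finset _) ⊆ U₁ ∪ U₂ ∪ N ×ˢ N := by
    intro x hx
    by_cases h1 : IsUnit x.1 <;> by_cases h2 : IsUnit x.2 <;> simp_all [N, U₁, U₂]
  have hU₁ : #U₁ ≤ Fintype.card R :=
    card_le_card_of_injOn Prod.fst (fun _ _ => mem_univ _) fun x hx y hy hxy => by
      simp only [U₁, coe_filter, mem_univ, true_and] at hx hy
      refine Prod.ext hxy (hx.2.mul_left_cancel ?_)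
      rw [hx.1, hxy, hy.1]
  have hU₂ : #U₂ ≤ Fintype.card R :=
    card_le_card_of_injOn Prod.snd (fun _ _ => mem_univ _) fun x hx y hy hxy => by
      simp only [U₂, coe_filter, mem_univ, true_and] at hx hy
      refine Prod.ext (hx.2.mul_right_cancel ?_) hxy
      rw [hx.1, hxy, hy.1]
  calc _ ≤ #(U₁ ∪ U₂ ∪ N ×ˢ N) := card_le_card hsub
    _ ≤ #U₁ + #U₂ + #N * #N :=
      (card_union_le _ _).trans (by rw [card_product]; gcongr; exact card_union_le _ _)
    _ ≤ _ := by rw [← sq]; omega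

def traceDetCount (t d : R) : ℕ :=
  #{A : Matrix (Fin 2) (Fin 2) R | A.trace = t ∧ A.det = d}

theorem traceDetCount_eq_sum (t d : R) :
    traceDetCount t d = ∑ a, #{x : R × R | x.1 * x.2 = a * (t - a) - d} := by
  rw [traceDetCount, card_eq_sum_card_fiberwise (f := fun A => A 0 0) (t := univ)
    fun _ _ => mem_coe.2 (mem_univ _)]
  refine sum_congr rfl fun a _ => card_bij' (fun A _ => (A 0 1, A 1 0))
    (fun x _ => !![a, x.1; x.2, t - a]) ?_ ?_ ?_ ?_
  · simp only [mem_filter, mem_univ, true_and, Matrix.trace_fin_two, Matrix.det_fin_two]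
    rintro A ⟨⟨ht, rfl⟩, rfl⟩
    rw [← ht]
    ring
  · simp only [mem_filter, mem_univ, true_and, Matrix.trace_fin_two_of, Matrix.det_fin_two_of]
    intro x hx
    refine ⟨⟨by ring, by rw [hx]; ring⟩, rfl⟩
  · simp only [mem_filter, mem_univ, true_and, Matrix.trace_fin_two]
    rintro A ⟨⟨ht, -⟩, rfl⟩
    ext i j
    fin_cases i <;> fin_cases j <;> simp [← ht]
  · simp

theorem card_det_eq (d : R) :
    #{A : Matrix (Fin 2) (Fin 2) R | A.det = d} = ∑ t, traceDetCount t d := by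
  rw [card_eq_sum_card_fiberwise (f := Matrix.trace) (t := univ)
    fun _ _ => mem_coe.2 (mem_univ _)]
  simp only [traceDetCount, filter_filter, and_comm]

theorem card_det_pair_mem (D : Finset (R × R)) :
    #{P : Matrix (Fin 2) (Fin 2) R × Matrix (Fin 2) (Fin 2) R | (P.1.det, P.2.det) ∈ D} =
      ∑ d ∈ D, (∑ t, traceDetCount t d.1) * ∑ t, traceDetCount t d.2 := by
  rw [← sum_card_fiberwise_eq_card_filter _ D]
  refine sum_congr rfl fun d _ => ?_
  simp only [Prod.ext_iff, ← card_det_eq]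
  convert card_filter_fst_and_snd (fun A : Matrix (Fin 2) (Fin 2) R => A.det = d.1)
    (fun A : Matrix (Fin 2) (Fin 2) R => A.det = d.2)

theorem card_det_pair_mem_trace_eq (D : Finset (R × R)) :
    #{P : Matrix (Fin 2) (Fin 2) R × Matrix (Fin 2) (Fin 2) R |
        (P.1.det, P.2.det) ∈ D ∧ P.1.trace = P.2.trace} =
      ∑ d ∈ D, ∑ t, traceDetCount t d.1 * traceDetCount t d.2 := by
  rw [← filter_filter, filter_comm, ← sum_card_fiberwise_eq_card_filter _ D]
  refine sum_congr rfl fun d _ => ?_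
  simp only [filter_filter, Prod.ext_iff, traceDetCount]
  rw [← card_filter_eq_and_and]

theorem sum_filter_isUnit_card_mul_eq (t d : R) :
    ∑ a ∈ {a : R | IsUnit (a * (t - a) - d)}, #{x : R × R | x.1 * x.2 = a * (t - a) - d} =
      #{a : R | IsUnit (a * (t - a) - d)} * #{a : R | IsUnit a} :=
  sum_const_nat fun _ ha => card_mul_eq_of_isUnit (mem_filter.1 ha).2

theorem card_det_pair_sandwich (D : Finset (R × R)) {m M : ℕ}
    (hm : ∀ t d : R, m ≤ traceDetCount t d) (hM : ∀ t d : R, traceDetCount t d ≤ M) :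
    Fintype.card R * m * #{P : Matrix (Fin 2) (Fin 2) R × Matrix (Fin 2) (Fin 2) R |
        (P.1.det, P.2.det) ∈ D ∧ P.1.trace = P.2.trace} ≤
      M * #{P : Matrix (Fin 2) (Fin 2) R × Matrix (Fin 2) (Fin 2) R | (P.1.det, P.2.det) ∈ D} ∧
    m * #{P : Matrix (Fin 2) (Fin 2) R × Matrix (Fin 2) (Fin 2) R | (P.1.det, P.2.det) ∈ D} ≤
      Fintype.card R * M * #{P : Matrix (Fin 2) (Fin 2) R × Matrix (Fin 2) (Fin 2) R |
        (P.1.det, P.2.det) ∈ D ∧ P.1.trace = P.2.trace} := by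
  simp only [card_det_pair_mem, card_det_pair_mem_trace_eq, mul_sum D]
  exact ⟨sum_le_sum fun d _ => card_mul_mul_sum_mul_le (hm · d.1) (hM · d.1),
    sum_le_sum fun d _ => mul_sum_mul_sum_le (hm · d.1) (hM · d.1)⟩

variable [IsLocalRing R]

open IsLocalRing Polynomial in
theorem card_not_isUnit_quadratic_le (t d : R) :
    #{a : R | ¬IsUnit (a * (t - a) - d)} ≤ 2 * #{a : R | ¬IsUnit a} := by
  classical
  set S : Finset R := {a | ¬IsUnit (a * (t - a) - d)}
  set f : (ResidueField R)[X] := X ^ 2 - C (residue R t) * X + C (residue R d)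
  have hf : f.natDegree = 2 := by unfold f; compute_degree!
  have hroots : (S.image (residue R)).val ⊆ f.roots := by
    intro z hz
    obtain ⟨a, ha, rfl⟩ := mem_image.1 hz
    have hres : residue R (a * (t - a) - d) = 0 :=
      (residue_eq_zero_iff _).2 ((mem_maximalIdeal _).2 (mem_filter.1 ha).2)
    rw [mem_roots (ne_zero_of_natDegree_gt (hf ▸ two_pos)), IsRoot, ← neg_eq_zero, ← hres]
    simp only [f, eval_add, eval_sub, eval_mul, eval_pow, eval_C, eval_X, map_sub, map_mul]
    ring
  have hfiber :
      ∀ z ∈ S.image (residue R), #{a ∈ S | residue R a = z} ≤ #{a : R | ¬IsUnit a} := by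
    intro z hz
    obtain ⟨a₀, -, rfl⟩ := mem_image.1 hz
    refine card_le_card_of_injOn (· - a₀) (fun a ha => ?_) sub_left_injective.injOn
    simp only [coe_filter, Set.mem_ofPred_eq, mem_univ, true_and] at ha ⊢
    rw [← mem_nonunits_iff, ← mem_maximalIdeal, ← residue_eq_zero_iff, map_sub, ha.2,
      sub_self]
  calc #S ≤ #{a : R | ¬IsUnit a} * #(S.image (residue R)) := card_le_mul_card_image _ _ hfiber
    _ ≤ _ := by rw [mul_comm]; gcongr; exact hf ▸ card_le_degree_of_subset_roots hroots

theorem le_traceDetCount (t d : R) :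
    (#{a : R | IsUnit a} - #{a : R | ¬IsUnit a}) * #{a : R | IsUnit a} ≤ traceDetCount t d := by
  have hbad := card_not_isUnit_quadratic_le t d
  have hsplit :=
    card_filter_add_card_filter_not (s := univ) fun a : R => IsUnit (a * (t - a) - d)
  have hunits := card_filter_add_card_filter_not (s := univ) fun a : R => IsUnit a
  rw [traceDetCount_eq_sum]
  calc _ ≤ #{a : R | IsUnit (a * (t - a) - d)} * #{a : R | IsUnit a} := by gcongr; omega
    _ = _ := (sum_filter_isUnit_card_mul_eq t d).symm
    _ ≤ _ := sum_le_sum_of_subset (filter_subset _ _)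

theorem traceDetCount_le (t d : R) :
    traceDetCount t d ≤ Fintype.card R * #{a : R | IsUnit a} +
      2 * #{a : R | ¬IsUnit a} * (2 * Fintype.card R + #{a : R | ¬IsUnit a} ^ 2) := by
  rw [traceDetCount_eq_sum,
    ← sum_filter_add_sum_filter_not univ fun a => IsUnit (a * (t - a) - d),
    sum_filter_isUnit_card_mul_eq]
  gcongr
  · exact card_le_univ _
  · exact (sum_le_card_nsmul _ _ _ fun a _ => card_mul_eq_le _).trans
      (by rw [smul_eq_mul]; gcongr; exact card_not_isUnit_quadratic_le t d)

end CommRing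

namespace ZMod

variable {p : ℕ} [hp : Fact p.Prime]

theorem isUnit_iff_castHom_ne_zero_s17 {d : ℕ} (hd : d ≠ 0) (x : ZMod (p ^ d)) :
    IsUnit x ↔ castHom (dvd_pow_self p hd) (ZMod p) x ≠ 0 := by
  rw [← natCast_zmod_val x, map_natCast,
    isUnit_natCast_iff_not_dvd_pow hp.out (Nat.pos_of_ne_zero hd), ne_eq, natCast_eq_zero_iff]

theorem isLocalRing_prime_pow {d : ℕ} (hd : d ≠ 0) : IsLocalRing (ZMod (p ^ d)) :=
  have : Nontrivial (ZMod (p ^ d)) := nontrivial_iff.2 (Nat.one_lt_pow hd hp.out.one_lt).ne'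
  .of_isUnit_or_isUnit_one_sub_self fun a => by
    simp only [isUnit_iff_castHom_ne_zero_s17 hd, map_sub, map_one]
    by_contra! h
    simp [h.1] at h

theorem card_filter_isUnit_prime_sq : #{x : ZMod (p ^ 2) | IsUnit x} = p ^ 2 - p := by
  rw [card_filter_isUnit, card_units_eq_totient, Nat.totient_prime_pow_succ hp.out, pow_one,
    Nat.mul_sub_one, sq]

theorem card_filter_not_isUnit_prime_sq : #{x : ZMod (p ^ 2) | ¬IsUnit x} = p := by
  have h := card_filter_add_card_filter_not (s := univ) fun x : ZMod (p ^ 2) => IsUnit x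
  rw [card_univ, ZMod.card, card_filter_isUnit_prime_sq] at h
  have : p ≤ p ^ 2 := Nat.le_self_pow two_ne_zero p
  omega

theorem traceDetCount_prime_sq_bounds (t d : ZMod (p ^ 2)) :
    p ^ 2 * ((p - 1) * (p - 2)) ≤ traceDetCount t d ∧
      traceDetCount t d ≤ p ^ 3 * (p + 5) := by
  have := isLocalRing_prime_pow (p := p) two_ne_zero
  have h₁ := le_traceDetCount t d
  have h₂ := traceDetCount_le t d
  simp only [ZMod.card, card_filter_isUnit_prime_sq, card_filter_not_isUnit_prime_sq] at h₁ h₂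
  have hp₂ : 2 ≤ p := hp.out.two_le
  have hsq : 2 * p ≤ p ^ 2 := by nlinarith
  zify [(by omega : p ≤ p ^ 2), (by omega : p ≤ p ^ 2 - p), (by omega : 1 ≤ p), hp₂]
    at h₁ h₂ ⊢
  constructor <;> linarith

end ZMod

theorem abs_mul_div_sub_one_le {n m M A C : ℕ} (hm : 0 < m) (hA : 0 < A)
    (h₁ : n * m * C ≤ M * A) (h₂ : m * A ≤ n * M * C) :
    |(n : ℚ) * (C / A) - 1| ≤ M / m - 1 := by
  have hM : 0 < M := Nat.pos_of_ne_zero fun h => by subst h; simp at h₂; omega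
  have hm' : (0 : ℚ) < m := by exact_mod_cast hm
  have hM' : (0 : ℚ) < M := by exact_mod_cast hM
  have hA' : (0 : ℚ) < A := by exact_mod_cast hA
  apply abs_sub_one_le_div_sub_one hm' hM'
  · rw [div_le_iff₀ hM', ← mul_div_assoc, div_mul_eq_mul_div, le_div_iff₀ hA']
    exact_mod_cast h₂.trans_eq (by ring)
  · rw [le_div_iff₀ hm', ← mul_div_assoc, div_mul_eq_mul_div, div_le_iff₀ hA']
    exact_mod_cast (le_of_eq (by ring)).trans h₁

-- The ratio minus one is `(8p - 2) / ((p - 1) (p - 2))`, which is at most `16 / p` once `p ≥ 5`.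
theorem exists_forall_lt_ratio_sub_one_lt {ε : ℚ} (hε : 0 < ε) :
    ∃ L : ℕ, ∀ p : ℕ, L < p →
      0 < p ^ 2 * ((p - 1) * (p - 2)) ∧
        ((p ^ 3 * (p + 5) : ℕ) : ℚ) / (p ^ 2 * ((p - 1) * (p - 2)) : ℕ) - 1 < ε := by
  obtain ⟨N, hN⟩ := exists_nat_gt (16 / ε)
  refine ⟨max 4 N, fun p hp =>
    ⟨Nat.mul_pos (pow_pos (by omega) 2) (Nat.mul_pos (by omega) (by omega)), ?_⟩⟩
  have hp₅ : (5 : ℚ) ≤ p := by exact_mod_cast (by omega : 5 ≤ p)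
  have hεp : 16 < ε * p := by
    have : (N : ℚ) < p := by exact_mod_cast (le_max_right 4 N).trans_lt hp
    rw [div_lt_iff₀ hε] at hN
    nlinarith
  push_cast [Nat.cast_sub (by omega : 1 ≤ p), Nat.cast_sub (by omega : 2 ≤ p)]
  have hpos : (0 : ℚ) < p * ((p - 1) * (p - 2)) := by
    apply mul_pos (by linarith) (mul_pos _ _) <;> linarith
  have hden : (0 : ℚ) < p ^ 2 * ((p - 1) * (p - 2)) := by
    rw [sq, mul_assoc]
    exact mul_pos (by linarith) hpos
  rw [div_sub_one hden.ne', div_lt_iff₀ hden]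
  nlinarith [mul_lt_mul_of_pos_right hεp hpos,
    mul_nonneg (mul_nonneg (sub_nonneg.2 hp₅) (by linarith : (0 : ℚ) ≤ 8 * p - 6))
      (by linarith : (0 : ℚ) ≤ p)]

theorem stmt_17_general (k₁ k₂ : ℕ) :
    ∀ ε : ℚ, 0 < ε → ∃ L : ℕ, ∀ ℓ : ℕ, ℓ.Prime → L < ℓ →
      |(ℓ : ℚ) ^ 2 *
        ((Nat.card {p : Matrix.GeneralLinearGroup (Fin 2) (ZMod (ℓ ^ 2)) ×
              Matrix.GeneralLinearGroup (Fin 2) (ZMod (ℓ ^ 2)) //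
            (∃ v : (ZMod (ℓ ^ 2))ˣ,
              (p.1 : Matrix (Fin 2) (Fin 2) (ZMod (ℓ ^ 2))).det =
                (v : ZMod (ℓ ^ 2)) ^ (k₁ - 1) ∧
              (p.2 : Matrix (Fin 2) (Fin 2) (ZMod (ℓ ^ 2))).det =
                (v : ZMod (ℓ ^ 2)) ^ (k₂ - 1)) ∧
            Matrix.trace (p.1 : Matrix (Fin 2) (Fin 2) (ZMod (ℓ ^ 2))) =
              Matrix.trace (p.2 : Matrix (Fin 2) (Fin 2) (ZMod (ℓ ^ 2)))} : ℚ) /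
          (Nat.card {p : Matrix.GeneralLinearGroup (Fin 2) (ZMod (ℓ ^ 2)) ×
              Matrix.GeneralLinearGroup (Fin 2) (ZMod (ℓ ^ 2)) //
            ∃ v : (ZMod (ℓ ^ 2))ˣ,
              (p.1 : Matrix (Fin 2) (Fin 2) (ZMod (ℓ ^ 2))).det =
                (v : ZMod (ℓ ^ 2)) ^ (k₁ - 1) ∧
              (p.2 : Matrix (Fin 2) (Fin 2) (ZMod (ℓ ^ 2))).det =
                (v : ZMod (ℓ ^ 2)) ^ (k₂ - 1)} : ℚ)) -
        1| < ε := by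
  intro ε hε
  obtain ⟨L, hL⟩ := exists_forall_lt_ratio_sub_one_lt hε
  refine ⟨L, fun ℓ hℓ hLℓ => ?_⟩
  have := Fact.mk hℓ
  obtain ⟨hm, hlt⟩ := hL ℓ hLℓ
  set D : Finset (ZMod (ℓ ^ 2) × ZMod (ℓ ^ 2)) :=
    {d | ∃ v : (ZMod (ℓ ^ 2))ˣ, d.1 = (v : ZMod (ℓ ^ 2)) ^ (k₁ - 1) ∧
      d.2 = (v : ZMod (ℓ ^ 2)) ^ (k₂ - 1)}
  have hD (A B : Matrix (Fin 2) (Fin 2) (ZMod (ℓ ^ 2))) : (A.det, B.det) ∈ D ↔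
      ∃ v : (ZMod (ℓ ^ 2))ˣ, A.det = (v : ZMod (ℓ ^ 2)) ^ (k₁ - 1) ∧
        B.det = (v : ZMod (ℓ ^ 2)) ^ (k₂ - 1) := by
    simp [D]
  have hunit (A B : Matrix (Fin 2) (Fin 2) (ZMod (ℓ ^ 2))) (h : (A.det, B.det) ∈ D) :
      IsUnit A ∧ IsUnit B := by
    obtain ⟨v, hA, hB⟩ := (hD A B).1 h
    rw [Matrix.isUnit_iff_isUnit_det, Matrix.isUnit_iff_isUnit_det, hA, hB]
    exact ⟨v.isUnit.pow _, v.isUnit.pow _⟩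
  simp_rw [← hD]
  rw [Nat.card_units_prod_subtype _ fun A B (h : _ ∧ A.trace = B.trace) => hunit A B h.1,
    Nat.card_units_prod_subtype _ hunit]
  obtain ⟨h₁, h₂⟩ := card_det_pair_sandwich D
    (fun t d => (ZMod.traceDetCount_prime_sq_bounds t d).1)
    (fun t d => (ZMod.traceDetCount_prime_sq_bounds t d).2)
  rw [ZMod.card] at h₁ h₂
  have hA : 0 < #{P : Matrix (Fin 2) (Fin 2) (ZMod (ℓ ^ 2)) ×
      Matrix (Fin 2) (Fin 2) (ZMod (ℓ ^ 2)) | (P.1.det, P.2.det) ∈ D} :=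
    card_pos.2 ⟨(1, 1), by simpa [D] using ⟨1, by simp⟩⟩
  simpa only [Nat.cast_pow] using (abs_mul_div_sub_one_le hm hA h₁ h₂).trans_lt hlt

/-- Fix k₁, k₂ ≥ 2 and set δ(ℓ²) = |𝒞_{ℓ²}|/|𝒜_{ℓ²}| ∈ ℚ. Then δ(ℓ²) ~ 1/ℓ² as ℓ
ranges over primes: for every ε > 0 there is L such that for every prime ℓ > L,
|ℓ²·δ(ℓ²) − 1| < ε. -/
theorem stmt_17 (k₁ k₂ : ℕ) (hk₁ : 2 ≤ k₁) (hk₂ : 2 ≤ k₂) :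
    ∀ ε : ℚ, 0 < ε → ∃ L : ℕ, ∀ ℓ : ℕ, ℓ.Prime → L < ℓ →
      |(ℓ : ℚ) ^ 2 *
        ((Nat.card {p : Matrix.GeneralLinearGroup (Fin 2) (ZMod (ℓ ^ 2)) ×
              Matrix.GeneralLinearGroup (Fin 2) (ZMod (ℓ ^ 2)) //
            (∃ v : (ZMod (ℓ ^ 2))ˣ,
              (p.1 : Matrix (Fin 2) (Fin 2) (ZMod (ℓ ^ 2))).det =
                (v : ZMod (ℓ ^ 2)) ^ (k₁ - 1) ∧
              (p.2 : Matrix (Fin 2) (Fin 2) (ZMod (ℓ ^ 2))).det =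
                (v : ZMod (ℓ ^ 2)) ^ (k₂ - 1)) ∧
            Matrix.trace (p.1 : Matrix (Fin 2) (Fin 2) (ZMod (ℓ ^ 2))) =
              Matrix.trace (p.2 : Matrix (Fin 2) (Fin 2) (ZMod (ℓ ^ 2)))} : ℚ) /
          (Nat.card {p : Matrix.GeneralLinearGroup (Fin 2) (ZMod (ℓ ^ 2)) ×
              Matrix.GeneralLinearGroup (Fin 2) (ZMod (ℓ ^ 2)) //
            ∃ v : (ZMod (ℓ ^ 2))ˣ,
              (p.1 : Matrix (Fin 2) (Fin 2) (ZMod (ℓ ^ 2))).det =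
                (v : ZMod (ℓ ^ 2)) ^ (k₁ - 1) ∧
              (p.2 : Matrix (Fin 2) (Fin 2) (ZMod (ℓ ^ 2))).det =
                (v : ZMod (ℓ ^ 2)) ^ (k₂ - 1)} : ℚ)) -
        1| < ε :=
  stmt_17_general k₁ k₂
end
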